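/- arXiv:2007.05998 — 7 statements merged into one kernel-verified Lean document; each statement's English description precedes it below -/
import Mathlib

section
/- Let \langle \cdot, \cdot \rangle be a bilinear pairing on polynomials satisfying \langle x f(x), g(y) \rangle + \langle f(x), y g(y) \rangle = (\int f d\mu_1)(\int g d\mu_2) for the Cauchy kernel pairing (rank-one shift condition), and let P_n, Q_n be the associated monic bi-orthogonal polynomials with \langle P_n, Q_m \rangle = h_n \delta_{n,m}, h_n \neq 0. Define a_n = -\int P_{n+1} d\mu_1 / \int P_n d\mu_1 (assuming the denominator is nonzero). Then for all m < n, \langle x(P_{n+1}(x) + a_n P_n(x)), Q_m(y) \rangle = -\langle P_{n+1}(x) + a_n P_n(x), y Q_m(y) \rangle, and this quantity vanishes whenever \deg(y Q_m) < n. -/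
open Polynomial

/-!
Since `a` is chosen so that `∫ (P_{n+1} + a P_n) dμ₁ = 0`, the shift identity loses its rank-one
term and becomes antisymmetry between multiplication by `x` and by `y`. If moreover
`deg (y Q_m) < n`, then `y Q_m` lies in the span of `Q_0, …, Q_{n-1}`, to which both `P_n` and
`P_{n+1}` are bi-orthogonal.
-/

theorem Polynomial.linearMap_eq_zero_of_degree_lt {R M : Type*} [Ring R] [Nontrivial R]
    [AddCommGroup M] [Module R M] (φ : R[X] →ₗ[R] M) {Q : ℕ → R[X]}
    (hQmonic : ∀ j, (Q j).Monic) (hQdeg : ∀ j, (Q j).natDegree = j) {k : ℕ}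
    (hφ : ∀ j < k, φ (Q j) = 0) {g : R[X]} (hg : g.degree < k) : φ g = 0 := by
  let S : Sequence R := ⟨Q, fun j => by rw [degree_eq_natDegree (hQmonic j).ne_zero, hQdeg]⟩
  have hspan : Submodule.span R (Q '' Set.Iio k) = degreeLT R k :=
    S.span_degreeLT fun j _ => by simp [S, (hQmonic j).leadingCoeff]
  have hle : degreeLT R k ≤ LinearMap.ker φ := by
    rw [← hspan, Submodule.span_le]
    rintro _ ⟨j, hj, rfl⟩
    exact hφ j hj
  exact hle (mem_degreeLT.mpr hg)

theorem stmt7_general (B : Polynomial ℝ →ₗ[ℝ] Polynomial ℝ →ₗ[ℝ] ℝ)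
    (L1 L2 : Polynomial ℝ →ₗ[ℝ] ℝ)
    (hshift : ∀ f g : Polynomial ℝ,
      B (Polynomial.X * f) g + B f (Polynomial.X * g) = L1 f * L2 g)
    (P Q : ℕ → Polynomial ℝ) (h : ℕ → ℝ)
    (hQmonic : ∀ n, (Q n).Monic) (hQdeg : ∀ n, (Q n).natDegree = n)
    (horth : ∀ n m, B (P n) (Q m) = if n = m then h n else 0)
    (n : ℕ) (a : ℝ) (hL : L1 (P n) ≠ 0) (ha : a = - L1 (P (n+1)) / L1 (P n)) :
    ∀ m < n,
      (B (Polynomial.X * (P (n+1) + Polynomial.C a * P n)) (Q m) =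
        - B (P (n+1) + Polynomial.C a * P n) (Polynomial.X * Q m)) ∧
      ((Polynomial.X * Q m).natDegree < n →
        B (Polynomial.X * (P (n+1) + Polynomial.C a * P n)) (Q m) = 0) := by
  intro m _
  have hL1 : L1 (P (n+1) + C a * P n) = 0 := by
    rw [map_add, ← smul_eq_C_mul, map_smul, smul_eq_mul, ha, div_mul_cancel₀ _ hL]
    ring
  have hanti : B (X * (P (n+1) + C a * P n)) (Q m) = - B (P (n+1) + C a * P n) (X * Q m) :=
    eq_neg_of_add_eq_zero_left (by rw [hshift, hL1, zero_mul])
  refine ⟨hanti, fun hdeg => ?_⟩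
  have hPorth : ∀ (k : ℕ) (g : ℝ[X]), g.degree < k → B (P k) g = 0 := fun k _ hg =>
    linearMap_eq_zero_of_degree_lt (B (P k)) hQmonic hQdeg
      (fun j hj => by rw [horth, if_neg hj.ne']) hg
  have hlt : (X * Q m).degree < (n : WithBot ℕ) :=
    degree_le_natDegree.trans_lt (by exact_mod_cast hdeg)
  rw [hanti, map_add, ← smul_eq_C_mul, map_smul, LinearMap.add_apply, LinearMap.smul_apply,
    hPorth n _ hlt, hPorth (n+1) _ (hlt.trans (by exact_mod_cast n.lt_succ_self))]
  simp

/-- For a bilinear Cauchy pairing satisfying the rank-one shift condition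
`⟨xf, g⟩ + ⟨f, yg⟩ = (∫f dμ₁)(∫g dμ₂)`, with `a_n` chosen to kill the rank-one term,
`⟨x(P_{n+1}+a_nP_n), Q_m⟩ = -⟨P_{n+1}+a_nP_n, yQ_m⟩`, which vanishes when `deg(yQ_m) < n`. -/
theorem stmt7 (B : Polynomial ℝ →ₗ[ℝ] Polynomial ℝ →ₗ[ℝ] ℝ)
    (L1 L2 : Polynomial ℝ →ₗ[ℝ] ℝ)
    (hshift : ∀ f g : Polynomial ℝ,
      B (Polynomial.X * f) g + B f (Polynomial.X * g) = L1 f * L2 g)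
    (P Q : ℕ → Polynomial ℝ) (h : ℕ → ℝ)
    (hPmonic : ∀ n, (P n).Monic) (hPdeg : ∀ n, (P n).natDegree = n)
    (hQmonic : ∀ n, (Q n).Monic) (hQdeg : ∀ n, (Q n).natDegree = n)
    (horth : ∀ n m, B (P n) (Q m) = if n = m then h n else 0) (hh : ∀ n, h n ≠ 0)
    (n : ℕ) (a : ℝ) (hL : L1 (P n) ≠ 0) (ha : a = - L1 (P (n+1)) / L1 (P n)) :
    ∀ m < n,
      (B (Polynomial.X * (P (n+1) + Polynomial.C a * P n)) (Q m) =
        - B (P (n+1) + Polynomial.C a * P n) (Polynomial.X * Q m)) ∧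
      ((Polynomial.X * Q m).natDegree < n →
        B (Polynomial.X * (P (n+1) + Polynomial.C a * P n)) (Q m) = 0) :=
  stmt7_general B L1 L2 hshift P Q h hQmonic hQdeg horth n a hL ha
end

section
/- Let \theta_1 = 1/k_1, \theta_2 = 1/k_2 with k_1, k_2 positive integers, and let P_n(x^{\theta_1}), Q_n(y^{\theta_2}) be the monic two-parameter Cauchy bi-orthogonal polynomials with \langle P_n, Q_m \rangle = h_n \delta_{n,m}, h_n \neq 0. Set a_n = -\int P_{n+1} d\mu_1 / \int P_n d\mu_1. Then x(P_{n+1}(x^{\theta_1}) + a_n P_n(x^{\theta_1})) = \sum_{\alpha=n-k_2}^{n+k_1+1} \eta_{n,\alpha} P_\alpha(x^{\theta_1}), where \eta_{n,\alpha} = \langle x(P_{n+1}+a_n P_n), Q_\alpha \rangle / h_\alpha; i.e., the polynomials satisfy a (k_1+k_2+2)-term recurrence. -/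
open Polynomial

/-!
Since `P i` and `Q i` have degree exactly `i`, the first `N` of them span the polynomials of
degree `< N`; by biorthogonality every `F` of degree `< N` therefore expands as
`F = ∑_{α < N} ⟨F, Q α⟩ / h α • P α`. For `F = X^{k₁} f` with `f = P (n+1) + a P n` the shift
identity gives `⟨X^{k₁} f, Q α⟩ = L₁ f · L₂ (Q α) - ⟨f, X^{k₂} Q α⟩`. The first term vanishes by
the choice of `a`, and the second whenever `α + k₂ < n`, because `f` is orthogonal to every
polynomial of degree `< n`.
-/

namespace Polynomial

variable {K : Type*} [Field K]

lemma span_image_Iio_eq_degreeLT {R : ℕ → K[X]} (hR : ∀ i, (R i).degree = i) (m : ℕ) :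
    Submodule.span K (R '' Set.Iio m) = degreeLT K m :=
  Sequence.span_degreeLT ⟨R, hR⟩ fun i _ ↦
    (leadingCoeff_ne_zero.2 ((⟨R, hR⟩ : Sequence K).ne_zero i)).isUnit

section Biorthogonal

variable (B : K[X] →ₗ[K] K[X] →ₗ[K] K) {P Q : ℕ → K[X]} {h : ℕ → K}

lemma pairing_eq_zero_of_degree_lt (horth : ∀ n m, B (P n) (Q m) = if n = m then h n else 0)
    (hQ : ∀ i, (Q i).degree = i) {m : ℕ} {g : K[X]} (hg : g.degree < m) : B (P m) g = 0 := by
  have hspan : Submodule.span K (Q '' Set.Iio m) ≤ LinearMap.ker (B (P m)) := by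
    rw [Submodule.span_le]
    rintro _ ⟨β, hβ, rfl⟩
    simp [horth, (Set.mem_Iio.1 hβ).ne']
  exact hspan (span_image_Iio_eq_degreeLT hQ m ▸ mem_degreeLT.2 hg)

lemma eq_sum_pairing_div_mul_of_degree_lt
    (horth : ∀ n m, B (P n) (Q m) = if n = m then h n else 0)
    (hP : ∀ i, (P i).degree = i) (hh : ∀ n, h n ≠ 0) {N : ℕ} {f : K[X]} (hf : f.degree < N) :
    f = ∑ α ∈ Finset.range N, C (B f (Q α) / h α) * P α := by
  let expand : K[X] →ₗ[K] K[X] :=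
    ∑ α ∈ Finset.range N, LinearMap.smulRight (S := K) ((h α)⁻¹ • B.flip (Q α)) (P α)
  have hexpand (g : K[X]) : expand g = ∑ α ∈ Finset.range N, C (B g (Q α) / h α) * P α := by
    simp [expand, LinearMap.sum_apply, smul_eq_C_mul, div_eq_inv_mul]
  have hP_fixed : Set.EqOn (LinearMap.id : K[X] →ₗ[K] K[X]) expand (P '' Set.Iio N) := by
    rintro _ ⟨β, hβ, rfl⟩
    rw [hexpand, Finset.sum_eq_single β]
    · simp [horth, hh]
    · intro α _ hαβ
      simp [horth, Ne.symm hαβ]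
    · exact fun hβ' ↦ absurd (Finset.mem_range.2 hβ) hβ'
  rw [← hexpand]
  exact LinearMap.eqOn_span' hP_fixed (span_image_Iio_eq_degreeLT hP N ▸ mem_degreeLT.2 hf)

lemma pairing_X_pow_mul_eq_zero (L1 L2 : K[X] →ₗ[K] K) {k1 k2 : ℕ}
    (hshift : ∀ f g : K[X], B (X ^ k1 * f) g + B f (X ^ k2 * g) = L1 f * L2 g)
    {n : ℕ} {f g : K[X]} (hL : L1 f = 0) (hf : ∀ g : K[X], g.degree < n → B f g = 0)
    (hg : (X ^ k2 * g).degree < (n : WithBot ℕ)) : B (X ^ k1 * f) g = 0 := by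
  simpa [hL, hf _ hg] using hshift f g

end Biorthogonal

end Polynomial

theorem stmt8_general (k1 k2 : ℕ)
    (B : Polynomial ℝ →ₗ[ℝ] Polynomial ℝ →ₗ[ℝ] ℝ)
    (L1 L2 : Polynomial ℝ →ₗ[ℝ] ℝ)
    (hshift : ∀ f g : Polynomial ℝ,
      B (Polynomial.X ^ k1 * f) g + B f (Polynomial.X ^ k2 * g) = L1 f * L2 g)
    (P Q : ℕ → Polynomial ℝ) (h : ℕ → ℝ)
    (hPmonic : ∀ n, (P n).Monic) (hPdeg : ∀ n, (P n).natDegree = n)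
    (hQmonic : ∀ n, (Q n).Monic) (hQdeg : ∀ n, (Q n).natDegree = n)
    (horth : ∀ n m, B (P n) (Q m) = if n = m then h n else 0) (hh : ∀ n, h n ≠ 0)
    (n : ℕ) (a : ℝ) (hL : L1 (P n) ≠ 0) (ha : a = - L1 (P (n+1)) / L1 (P n)) :
    Polynomial.X ^ k1 * (P (n+1) + Polynomial.C a * P n) =
      ∑ α ∈ Finset.Icc (n - k2) (n + k1 + 1),
        Polynomial.C (B (Polynomial.X ^ k1 * (P (n+1) + Polynomial.C a * P n)) (Q α) / h α)
          * P α := by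
  have hP (i : ℕ) : (P i).degree = i := by rw [degree_eq_natDegree (hPmonic i).ne_zero, hPdeg]
  have hQ (i : ℕ) : (Q i).degree = i := by rw [degree_eq_natDegree (hQmonic i).ne_zero, hQdeg]
  set f := P (n + 1) + C a * P n with hf
  rw [← smul_eq_C_mul] at hf
  have hLf : L1 f = 0 := by
    rw [hf, map_add, map_smul, ha, smul_eq_mul, div_mul_cancel₀ _ hL, add_neg_cancel]
  have hf_orth (g : ℝ[X]) (hg : g.degree < n) : B f g = 0 := by
    have hg' : g.degree < ↑(n + 1) := hg.trans (by exact_mod_cast n.lt_succ_self)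
    simp [hf, pairing_eq_zero_of_degree_lt B horth hQ hg,
      pairing_eq_zero_of_degree_lt B horth hQ hg']
  have hF_deg : (X ^ k1 * f).degree < ↑(n + k1 + 2) := by
    have hf_deg : f.degree < ↑(n + 2) := by
      rw [hf]
      refine (degree_add_le _ _).trans_lt (max_lt ?_ ((degree_smul_le _ _).trans_lt ?_)) <;>
        rw [hP] <;> exact_mod_cast (by omega)
    rw [degree_mul, degree_X_pow, Nat.add_right_comm, Nat.cast_add, add_comm]
    exact WithBot.add_lt_add_right (by simp) hf_deg
  refine (eq_sum_pairing_div_mul_of_degree_lt B horth hP hh hF_deg).trans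
    (Finset.sum_subset (fun α hα ↦ ?_) fun α hα hα' ↦ ?_).symm
  · simp only [Finset.mem_Icc, Finset.mem_range] at hα ⊢
    omega
  · rw [pairing_X_pow_mul_eq_zero B L1 L2 hshift hLf hf_orth, zero_div, map_zero, zero_mul]
    simp only [Finset.mem_range, Finset.mem_Icc] at hα hα'
    rw [degree_mul, degree_X_pow, hQ]
    exact_mod_cast (by omega)

/-- The `(k₁+k₂+2)`-term recurrence relation for the two-parameter Cauchy bi-orthogonal
polynomials (in the variable `z = x^{θ₁}`, with `θᵢ = 1/kᵢ`, multiplication by `x`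
is multiplication by `z^{k₁}` resp. `z^{k₂}`):
`x(P_{n+1} + a_n P_n) = ∑_{α=n-k₂}^{n+k₁+1} η_{n,α} P_α` with `η_{n,α} = ⟨x(P_{n+1}+a_nP_n), Q_α⟩/h_α`. -/
theorem stmt8 (k1 k2 : ℕ) (hk1 : 0 < k1) (hk2 : 0 < k2)
    (B : Polynomial ℝ →ₗ[ℝ] Polynomial ℝ →ₗ[ℝ] ℝ)
    (L1 L2 : Polynomial ℝ →ₗ[ℝ] ℝ)
    (hshift : ∀ f g : Polynomial ℝ,
      B (Polynomial.X ^ k1 * f) g + B f (Polynomial.X ^ k2 * g) = L1 f * L2 g)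
    (P Q : ℕ → Polynomial ℝ) (h : ℕ → ℝ)
    (hPmonic : ∀ n, (P n).Monic) (hPdeg : ∀ n, (P n).natDegree = n)
    (hQmonic : ∀ n, (Q n).Monic) (hQdeg : ∀ n, (Q n).natDegree = n)
    (horth : ∀ n m, B (P n) (Q m) = if n = m then h n else 0) (hh : ∀ n, h n ≠ 0)
    (n : ℕ) (a : ℝ) (hL : L1 (P n) ≠ 0) (ha : a = - L1 (P (n+1)) / L1 (P n)) :
    Polynomial.X ^ k1 * (P (n+1) + Polynomial.C a * P n) =
      ∑ α ∈ Finset.Icc (n - k2) (n + k1 + 1),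
        Polynomial.C (B (Polynomial.X ^ k1 * (P (n+1) + Polynomial.C a * P n)) (Q α) / h α)
          * P α :=
  stmt8_general k1 k2 B L1 L2 hshift P Q h hPmonic hPdeg hQmonic hQdeg horth hh n a hL ha
end

section
/- Let the time-dependent measures satisfy \partial_t d\mu_1(x;t) = x\, d\mu_1(x;t) and \partial_t d\mu_2(y;t) = y\, d\mu_2(y;t), and let P_n(\cdot;t), Q_n(\cdot;t) be the associated monic bi-orthogonal polynomials with \langle P_n, Q_m \rangle_t = h_n(t)\delta_{n,m}, and a_n(t) = -\int P_{n+1} d\mu_1/\int P_n d\mu_1. Then \partial_t(P_{n+1}(x^{\theta_1};t) + a_n(t) P_n(x^{\theta_1};t)) = \frac{\partial_t(a_n h_n)}{h_n} P_n(x^{\theta_1};t). -/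
/-!
Differentiating `B_t(P_{n+1} + a_n P_n, g)` for a fixed `g` produces the pairing of the
derivative with `g` plus the rank-one term `L₁(P_{n+1} + a_n P_n) · L₂(g)`, and the choice of
`a_n` makes `L₁` vanish there. For `deg g ≤ n`, biorthogonality gives
`B_t(P_{n+1} + a_n P_n, g) = a_n h_n · [xⁿ] g`, so the derivative pairs with every `Q_j`, `j ≤ n`,
exactly as `(∂_t(a_n h_n)/h_n) P_n` does. Both have degree `≤ n`, and a polynomial of degree
`≤ n` orthogonal to `Q_0, …, Q_n` vanishes.
-/

open Polynomial

namespace Polynomial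

section Semiring

variable {R : Type*} [Semiring R]

theorem mem_degreeLT_of_natDegree_lt {p : R[X]} {n : ℕ} (hp : p.natDegree < n) :
    p ∈ degreeLT R n :=
  mem_degreeLT.2 (degree_le_natDegree.trans_lt (WithBot.coe_lt_coe.2 hp))

theorem map_eq_sum_range_of_mem_degreeLT {M : Type*} [AddCommMonoid M] [Module R M]
    (Φ : R[X] →ₗ[R] M) {N : ℕ} {p : R[X]} (hp : p ∈ degreeLT R N) :
    Φ p = ∑ i ∈ Finset.range N, p.coeff i • Φ (X ^ i) := by
  rcases eq_or_ne p 0 with rfl | hp0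
  · simp
  rw [mem_degreeLT, ← natDegree_lt_iff_degree_lt hp0] at hp
  conv_lhs => rw [p.as_sum_range_C_mul_X_pow' hp]
  simp only [map_sum, ← smul_eq_C_mul, map_smul]

end Semiring

section Ring

variable {R : Type*} [Ring R]

theorem sub_C_coeff_mul_mem_degreeLT {q g : R[X]} {k : ℕ} (hq : q.Monic) (hqd : q.natDegree = k)
    (hg : g ∈ degreeLT R (k + 1)) : g - C (g.coeff k) * q ∈ degreeLT R k := by
  rw [mem_degreeLT, degree_lt_iff_coeff_zero] at hg ⊢
  intro i hi
  rw [coeff_sub, coeff_C_mul]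
  rcases hi.eq_or_lt with rfl | hlt
  · rw [← hqd, hq.coeff_natDegree, mul_one, sub_self]
  · rw [hg i hlt, coeff_eq_zero_of_natDegree_lt (p := q) (by omega), mul_zero, sub_zero]

theorem map_eq_zero_of_mem_degreeLT [Nontrivial R] {M : Type*} [AddCommGroup M] [Module R M]
    {P : ℕ → R[X]} (hPm : ∀ n, (P n).Monic) (hPd : ∀ n, (P n).natDegree = n)
    {Φ : R[X] →ₗ[R] M} {m : ℕ} (hΦ : ∀ i < m, Φ (P i) = 0) {g : R[X]}
    (hg : g ∈ degreeLT R m) : Φ g = 0 := by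
  let S : Sequence R := ⟨P, fun n => by rw [degree_eq_natDegree (hPm n).ne_zero, hPd]⟩
  rw [← S.span_degreeLT fun i _ => by simp [S, (hPm i).leadingCoeff]] at hg
  exact (Submodule.span_le (p := LinearMap.ker Φ)).2
    (by rintro _ ⟨i, hi, rfl⟩; exact hΦ i hi) hg

end Ring

section Biorthogonal

variable {R : Type*} [CommRing R] [Nontrivial R] {B : R[X] →ₗ[R] R[X] →ₗ[R] R}
  {P Q : ℕ → R[X]} {h : ℕ → R}

theorem pairing_eq_zero_of_mem_degreeLT (hQm : ∀ n, (Q n).Monic)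
    (hQd : ∀ n, (Q n).natDegree = n) (horth : ∀ n m, B (P n) (Q m) = if n = m then h n else 0)
    {k : ℕ} {g : R[X]} (hg : g ∈ degreeLT R k) : B (P k) g = 0 :=
  map_eq_zero_of_mem_degreeLT hQm hQd (fun i hi => by rw [horth, if_neg hi.ne']) hg

theorem pairing_eq_coeff_mul (hQm : ∀ n, (Q n).Monic) (hQd : ∀ n, (Q n).natDegree = n)
    (horth : ∀ n m, B (P n) (Q m) = if n = m then h n else 0)
    {k : ℕ} {g : R[X]} (hg : g ∈ degreeLT R (k + 1)) : B (P k) g = g.coeff k * h k := by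
  have hlow := pairing_eq_zero_of_mem_degreeLT hQm hQd horth
    (sub_C_coeff_mul_mem_degreeLT (hQm k) (hQd k) hg)
  rwa [map_sub, sub_eq_zero, ← smul_eq_C_mul, map_smul, horth, if_pos rfl, smul_eq_mul] at hlow

theorem pairing_add_C_mul_eq (hQm : ∀ n, (Q n).Monic) (hQd : ∀ n, (Q n).natDegree = n)
    (horth : ∀ n m, B (P n) (Q m) = if n = m then h n else 0)
    {n : ℕ} (c : R) {g : R[X]} (hg : g ∈ degreeLT R (n + 1)) :
    B (P (n + 1) + C c * P n) g = c * h n * g.coeff n := by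
  rw [map_add, ← smul_eq_C_mul, map_smul, LinearMap.add_apply, LinearMap.smul_apply,
    pairing_eq_zero_of_mem_degreeLT hQm hQd horth hg, pairing_eq_coeff_mul hQm hQd horth hg,
    smul_eq_mul, zero_add, mul_assoc, mul_comm (g.coeff n)]

theorem pairing_left_eq_coeff_mul (hPm : ∀ n, (P n).Monic) (hPd : ∀ n, (P n).natDegree = n)
    (horth : ∀ n m, B (P n) (Q m) = if n = m then h n else 0)
    {k : ℕ} {g : R[X]} (hg : g ∈ degreeLT R (k + 1)) : B g (Q k) = g.coeff k * h k :=
  pairing_eq_coeff_mul (B := B.flip) hPm hPd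
    (fun n m => by
      rcases eq_or_ne n m with rfl | hnm
      · simp [horth]
      · simp [horth, hnm, hnm.symm]) hg

theorem eq_zero_of_forall_pairing_eq_zero [NoZeroDivisors R] (hPm : ∀ n, (P n).Monic)
    (hPd : ∀ n, (P n).natDegree = n) (horth : ∀ n m, B (P n) (Q m) = if n = m then h n else 0)
    (hh : ∀ n, h n ≠ 0) :
    ∀ {m : ℕ} {g : R[X]}, g ∈ degreeLT R m → (∀ j < m, B g (Q j) = 0) → g = 0
  | 0, g, hg, _ => by simpa [mem_degreeLT] using hg
  | m + 1, g, hg, hpair => by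
    have hcoeff : g.coeff m = 0 := by
      have := hpair m m.lt_succ_self
      rwa [pairing_left_eq_coeff_mul hPm hPd horth hg, mul_eq_zero, or_iff_left (hh m)] at this
    refine eq_zero_of_forall_pairing_eq_zero hPm hPd horth hh ?_
      fun j hj => hpair j (hj.trans m.lt_succ_self)
    rw [mem_degreeLT, degree_lt_iff_coeff_zero] at hg ⊢
    intro i hi
    rcases hi.eq_or_lt with rfl | hlt
    exacts [hcoeff, hg i hlt]

theorem eq_C_mul_of_forall_pairing_eq [NoZeroDivisors R] (hPm : ∀ n, (P n).Monic)
    (hPd : ∀ n, (P n).natDegree = n) (horth : ∀ n m, B (P n) (Q m) = if n = m then h n else 0)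
    (hh : ∀ n, h n ≠ 0) {n : ℕ} {D : R[X]} {c : R} (hD : D ∈ degreeLT R (n + 1))
    (hpair : ∀ j ≤ n, B D (Q j) = c * B (P n) (Q j)) : D = C c * P n := by
  rw [← sub_eq_zero, ← smul_eq_C_mul]
  have hPn : P n ∈ degreeLT R (n + 1) := mem_degreeLT_of_natDegree_lt (by rw [hPd]; omega)
  refine eq_zero_of_forall_pairing_eq_zero hPm hPd horth hh
    (sub_mem hD (Submodule.smul_mem _ c hPn)) fun j hj => ?_
  rw [map_sub, map_smul, LinearMap.sub_apply, LinearMap.smul_apply, hpair j (by omega),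
    smul_eq_mul, sub_self]

end Biorthogonal

section TimeDerivative

variable {𝕜 : Type*} [NontriviallyNormedField 𝕜] {p : 𝕜 → 𝕜[X]} {p' : 𝕜[X]} {t : 𝕜}

theorem mem_degreeLT_of_hasDerivAt_coeff {m : ℕ}
    (hp : ∀ i, HasDerivAt (fun s => (p s).coeff i) (p'.coeff i) t)
    (hconst : ∀ i ≥ m, ∀ s, (p s).coeff i = (p t).coeff i) : p' ∈ degreeLT 𝕜 m := by
  rw [mem_degreeLT, degree_lt_iff_coeff_zero]
  exact fun i hi => (hp i).unique
    ((hasDerivAt_const t _).congr_of_eventuallyEq (Filter.Eventually.of_forall (hconst i hi)))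

theorem mem_degreeLT_of_hasDerivAt_coeff_of_monic {m : ℕ}
    (hp : ∀ i, HasDerivAt (fun s => (p s).coeff i) (p'.coeff i) t)
    (hmonic : ∀ s, (p s).Monic) (hdeg : ∀ s, (p s).natDegree = m) : p' ∈ degreeLT 𝕜 m := by
  refine mem_degreeLT_of_hasDerivAt_coeff hp fun i hi s => ?_
  rcases hi.eq_or_lt with rfl | hlt
  · have hs := (hmonic s).coeff_natDegree
    have ht := (hmonic t).coeff_natDegree
    rw [hdeg] at hs ht
    rw [hs, ht]
  · rw [coeff_eq_zero_of_natDegree_lt (by rw [hdeg]; exact hlt),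
      coeff_eq_zero_of_natDegree_lt (by rw [hdeg]; exact hlt)]

theorem hasDerivAt_apply_of_hasDerivAt_coeff {F : Type*} [NormedAddCommGroup F]
    [NormedSpace 𝕜 F] {Φ : 𝕜 → 𝕜[X] →ₗ[𝕜] F} {Φ' : 𝕜[X] →ₗ[𝕜] F}
    (hΦ : ∀ f, HasDerivAt (fun s => Φ s f) (Φ' f) t) {N : ℕ} (hN : ∀ s, p s ∈ degreeLT 𝕜 N)
    (hp : ∀ i, HasDerivAt (fun s => (p s).coeff i) (p'.coeff i) t) :
    HasDerivAt (fun s => Φ s (p s)) (Φ t p' + Φ' (p t)) t := by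
  have hcoeff : ∀ i ≥ N, ∀ s, (p s).coeff i = 0 := fun i hi s =>
    (degree_lt_iff_coeff_zero _ _).1 (mem_degreeLT.1 (hN s)) i hi
  have hp' : p' ∈ degreeLT 𝕜 N :=
    mem_degreeLT_of_hasDerivAt_coeff hp fun i hi s => by rw [hcoeff i hi, hcoeff i hi]
  rw [_root_.funext fun s => map_eq_sum_range_of_mem_degreeLT (Φ s) (hN s),
    map_eq_sum_range_of_mem_degreeLT (Φ t) hp', map_eq_sum_range_of_mem_degreeLT Φ' (hN t),
    ← Finset.sum_add_distrib]
  refine HasDerivAt.fun_sum fun i _ => ?_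
  rw [add_comm]
  exact (hp i).smul (hΦ (X ^ i))

theorem hasDerivAt_pairing_of_map_eq_zero {B : 𝕜 → 𝕜[X] →ₗ[𝕜] 𝕜[X] →ₗ[𝕜] 𝕜}
    {L₁ L₂ : 𝕜[X] →ₗ[𝕜] 𝕜} (hB : ∀ f g, HasDerivAt (fun s => B s f g) (L₁ f * L₂ g) t)
    {N : ℕ} (hN : ∀ s, p s ∈ degreeLT 𝕜 N)
    (hp : ∀ i, HasDerivAt (fun s => (p s).coeff i) (p'.coeff i) t) (hL₁ : L₁ (p t) = 0)
    (g : 𝕜[X]) : HasDerivAt (fun s => B s (p s) g) (B t p' g) t := by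
  simpa [hL₁] using hasDerivAt_apply_of_hasDerivAt_coeff (Φ := fun s => (B s).flip g)
    (Φ' := L₂ g • L₁) (fun f => by
      simpa only [LinearMap.flip_apply, LinearMap.smul_apply, smul_eq_mul, mul_comm]
        using hB f g) hN hp

end TimeDerivative

end Polynomial

/-- In the variable `z = x^{θᵢ}`, `θᵢ = 1/kᵢ`, the evolution `∂_t dμ₁ = x dμ₁`, `∂_t dμ₂ = y dμ₂`
reads `∂_t B(f,g) = B(z^{k₁}f, g) + B(f, z^{k₂}g)`; `hshift` is the Cauchy-kernel identity that
makes this derivative rank one. -/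
theorem stmt9_general (k1 k2 : ℕ)
    (B : ℝ → Polynomial ℝ →ₗ[ℝ] Polynomial ℝ →ₗ[ℝ] ℝ)
    (L1 L2 : ℝ → Polynomial ℝ →ₗ[ℝ] ℝ)
    (hB : ∀ (f g : Polynomial ℝ) (t : ℝ),
      HasDerivAt (fun s => B s f g)
        (B t (Polynomial.X ^ k1 * f) g + B t f (Polynomial.X ^ k2 * g)) t)
    (hshift : ∀ (f g : Polynomial ℝ) (t : ℝ),
      B t (Polynomial.X ^ k1 * f) g + B t f (Polynomial.X ^ k2 * g) = L1 t f * L2 t g)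
    (P Q P' : ℝ → ℕ → Polynomial ℝ)
    (hPmonic : ∀ t n, (P t n).Monic) (hPdeg : ∀ t n, (P t n).natDegree = n)
    (hQmonic : ∀ t n, (Q t n).Monic) (hQdeg : ∀ t n, (Q t n).natDegree = n)
    (h : ℝ → ℕ → ℝ)
    (horth : ∀ t n m, B t (P t n) (Q t m) = if n = m then h t n else 0)
    (hh : ∀ t n, h t n ≠ 0)
    (hP' : ∀ (t : ℝ) (n i : ℕ),
      HasDerivAt (fun s => (P s n).coeff i) ((P' t n).coeff i) t)
    (a : ℝ → ℕ → ℝ)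
    (haL : ∀ t n, L1 t (P t n) ≠ 0)
    (ha : ∀ t n, a t n = - L1 t (P t (n+1)) / L1 t (P t n))
    (t : ℝ) (n : ℕ) (a' h' : ℝ)
    (ha' : HasDerivAt (fun s => a s n) a' t)
    (hh' : HasDerivAt (fun s => h s n) h' t) :
    P' t (n+1) + Polynomial.C a' * P t n + Polynomial.C (a t n) * P' t n =
      Polynomial.C ((a' * h t n + a t n * h') / h t n) * P t n := by
  set D := P' t (n + 1) + C a' * P t n + C (a t n) * P' t n
  set Pa : ℝ → ℝ[X] := fun s => P s (n + 1) + C (a s n) * P s n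
  have hP_mem : ∀ s {m k}, m < k → P s m ∈ degreeLT ℝ k := fun s m k hmk =>
    mem_degreeLT_of_natDegree_lt (by rwa [hPdeg])
  have hPa_coeff : ∀ i, HasDerivAt (fun s => (Pa s).coeff i) (D.coeff i) t := fun i => by
    simpa [Pa, D, coeff_C_mul, add_assoc] using (hP' t (n + 1) i).fun_add (ha'.fun_mul (hP' t n i))
  have hPa_deg : ∀ s, Pa s ∈ degreeLT ℝ (n + 2) := fun s => by
    simp only [Pa, ← smul_eq_C_mul]
    exact add_mem (hP_mem s (by omega)) (Submodule.smul_mem _ _ (hP_mem s (by omega)))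
  have hL1 : L1 t (Pa t) = 0 := by
    simp only [Pa, map_add, ← smul_eq_C_mul, map_smul, smul_eq_mul, ha,
      div_mul_cancel₀ _ (haL t n)]
    ring
  have hD_deg : D ∈ degreeLT ℝ (n + 1) := by
    have hP'_deg : ∀ m, P' t m ∈ degreeLT ℝ m := fun m =>
      mem_degreeLT_of_hasDerivAt_coeff_of_monic (hP' t m) (hPmonic · m) (hPdeg · m)
    simp only [D, ← smul_eq_C_mul]
    exact add_mem (add_mem (hP'_deg _) (Submodule.smul_mem _ _ (hP_mem t n.lt_succ_self)))
      (Submodule.smul_mem _ _ (degreeLT_mono n.le_succ (hP'_deg n)))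
  have hD_pair : ∀ g ∈ degreeLT ℝ (n + 1), B t D g = (a' * h t n + a t n * h') * g.coeff n :=
    fun g hg => (hasDerivAt_pairing_of_map_eq_zero (fun f g => hshift f g t ▸ hB f g t)
      hPa_deg hPa_coeff hL1 g).unique (((ha'.mul hh').mul_const _).congr_of_eventuallyEq
        (.of_forall fun s => pairing_add_C_mul_eq (hQmonic s) (hQdeg s) (horth s) _ hg))
  refine eq_C_mul_of_forall_pairing_eq (hPmonic t) (hPdeg t) (horth t) (hh t) hD_deg
    fun j hj => ?_
  have hQj : Q t j ∈ degreeLT ℝ (n + 1) := mem_degreeLT_of_natDegree_lt (by rw [hQdeg]; omega)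
  rw [hD_pair _ hQj, pairing_eq_coeff_mul (hQmonic t) (hQdeg t) (horth t) hQj]
  field_simp [hh t n]

/-- Time evolution of the two-parameter Cauchy bi-orthogonal polynomials:
`∂_t(P_{n+1} + a_n P_n) = (∂_t(a_n h_n)/h_n) P_n`, for the time-dependent Cauchy pairing
whose measures evolve by `∂_t dμ₁ = x dμ₁`, `∂_t dμ₂ = y dμ₂` (so that, in the variable
`z = x^{θᵢ}` with `θᵢ = 1/kᵢ`, `∂_t B(f,g) = B(z^{k₁}f, g) + B(f, z^{k₂}g)`). -/
theorem stmt9 (k1 k2 : ℕ) (hk1 : 0 < k1) (hk2 : 0 < k2)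
    (B : ℝ → Polynomial ℝ →ₗ[ℝ] Polynomial ℝ →ₗ[ℝ] ℝ)
    (L1 L2 : ℝ → Polynomial ℝ →ₗ[ℝ] ℝ)
    (hB : ∀ (f g : Polynomial ℝ) (t : ℝ),
      HasDerivAt (fun s => B s f g)
        (B t (Polynomial.X ^ k1 * f) g + B t f (Polynomial.X ^ k2 * g)) t)
    (hshift : ∀ (f g : Polynomial ℝ) (t : ℝ),
      B t (Polynomial.X ^ k1 * f) g + B t f (Polynomial.X ^ k2 * g) = L1 t f * L2 t g)
    (hL1d : ∀ (f : Polynomial ℝ) (t : ℝ),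
      HasDerivAt (fun s => L1 s f) (L1 t (Polynomial.X ^ k1 * f)) t)
    (P Q P' : ℝ → ℕ → Polynomial ℝ)
    (hPmonic : ∀ t n, (P t n).Monic) (hPdeg : ∀ t n, (P t n).natDegree = n)
    (hQmonic : ∀ t n, (Q t n).Monic) (hQdeg : ∀ t n, (Q t n).natDegree = n)
    (h : ℝ → ℕ → ℝ)
    (horth : ∀ t n m, B t (P t n) (Q t m) = if n = m then h t n else 0)
    (hh : ∀ t n, h t n ≠ 0)
    (hP' : ∀ (t : ℝ) (n i : ℕ),
      HasDerivAt (fun s => (P s n).coeff i) ((P' t n).coeff i) t)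
    (a : ℝ → ℕ → ℝ)
    (haL : ∀ t n, L1 t (P t n) ≠ 0)
    (ha : ∀ t n, a t n = - L1 t (P t (n+1)) / L1 t (P t n))
    (t : ℝ) (n : ℕ) (a' h' : ℝ)
    (ha' : HasDerivAt (fun s => a s n) a' t)
    (hh' : HasDerivAt (fun s => h s n) h' t) :
    P' t (n+1) + Polynomial.C a' * P t n + Polynomial.C (a t n) * P' t n =
      Polynomial.C ((a' * h t n + a t n * h') / h t n) * P t n :=
  stmt9_general k1 k2 B L1 L2 hB hshift P Q P' hPmonic hPdeg hQmonic hQdeg h horth hh hP' a haL ha t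
    n a' h' ha' hh'
end

section
/- Let M be an (n+1) \times (n+1) matrix with entries in a commutative ring, and for index sets denote by M(i_1, i_2; j_1, j_2) the minor obtained by deleting rows i_1, i_2 and columns j_1, j_2, and M(i; j) the minor deleting row i and column j. Then the Jacobi (Desnanot) identity holds: \det M \cdot M(i_1, i_2; j_1, j_2) = M(i_1; j_1) M(i_2; j_2) - M(i_1; j_2) M(i_2; j_1), for i_1 < i_2, j_1 < j_2. -/
/-!
Let `D = det M` and let `c i` be the `i`-th column of `adj M`, so that `M *ᵥ c i = D • eᵢ`.
Replacing columns `j₁, j₂` of `M` by `M *ᵥ c i₁, M *ᵥ c i₂` multiplies the determinant by the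
`2 × 2` minor of `adj M` on rows `j₁, j₂` and columns `i₁, i₂`; on the other hand these columns are
`D • eᵢ₁, D • eᵢ₂`, and a double cofactor expansion computes that determinant as `D²` times the
signed complementary minor. Up to signs the `2 × 2` minor of `adj M` is the right-hand side, so
this proves the identity multiplied by `D`. The factor `D` cancels for the generic matrix over
`ℤ[Xᵢⱼ]`, and the identity specialises to every `M`.
-/

open Matrix

theorem Pi.single_comp_succAbove {M : Type*} [Zero M] {k : ℕ} (p : Fin (k + 1)) (i : Fin k)
    (x : M) : Pi.single (p.succAbove i) x ∘ p.succAbove = Pi.single i x :=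
  Function.update_comp_eq_of_injective _ Fin.succAbove_right_injective _ _

theorem Matrix.submatrix_updateCol_of_injective {α l m n o : Type*} [DecidableEq n]
    [DecidableEq o] (A : Matrix m n α) (f : l → m) {g : o → n} (hg : Function.Injective g)
    (j : o) (v : m → α) :
    (A.updateCol (g j) v).submatrix f g = (A.submatrix f g).updateCol j (v ∘ f) := by
  ext a b
  rcases eq_or_ne b j with rfl | hb
  · simp
  · simp [updateCol_ne hb, updateCol_ne (hg.ne hb)]

namespace Matrix

variable {R : Type*} [CommRing R]

section Columns

variable {ι : Type*} [Fintype ι] [DecidableEq ι]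

theorem det_updateCol_mulVec (A : Matrix ι ι R) (j : ι) (c : ι → R) :
    (A.updateCol j (A *ᵥ c)).det = c j * A.det := by
  rw [← smul_eq_mul, ← det_updateCol_sum]
  congr
  ext k
  simp [mulVec, dotProduct, mul_comm]

theorem updateCol_mulVec_of_apply_eq_zero (A : Matrix ι ι R) {j : ι} (u : ι → R) {c : ι → R}
    (hc : c j = 0) : A.updateCol j u *ᵥ c = A *ᵥ c := by
  ext i
  refine Finset.sum_congr rfl fun k _ => ?_
  rcases eq_or_ne k j with rfl | hk
  · simp [hc]
  · simp [updateCol_ne hk]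

theorem det_updateCol_mulVec_updateCol_mulVec (A : Matrix ι ι R) {j₁ j₂ : ι} (h : j₁ ≠ j₂)
    (c₁ c₂ : ι → R) :
    ((A.updateCol j₁ (A *ᵥ c₁)).updateCol j₂ (A *ᵥ c₂)).det =
      (c₁ j₁ * c₂ j₂ - c₁ j₂ * c₂ j₁) * A.det := by
  let B := A.updateCol j₁ (A *ᵥ c₁)
  have hsplit : A *ᵥ c₂ = B *ᵥ Function.update c₂ j₁ 0 + c₂ j₁ • A.col j₁ := by
    have hc₂ : c₂ = Function.update c₂ j₁ 0 + Pi.single j₁ (c₂ j₁) := by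
      ext k
      rcases eq_or_ne k j₁ with rfl | hk <;> simp [*]
    conv_lhs => rw [hc₂]
    rw [mulVec_add, mulVec_single,
      updateCol_mulVec_of_apply_eq_zero A (A *ᵥ c₁) (Function.update_self j₁ 0 c₂)]
    ext i
    simp [mul_comm]
  have hswap : B.updateCol j₂ (A.col j₁) =
      (A.updateCol j₂ (A *ᵥ c₁)).submatrix id (Equiv.swap j₁ j₂) := by
    ext i k
    rcases eq_or_ne k j₁ with rfl | hk₁
    · simp [B, h]
    rcases eq_or_ne k j₂ with rfl | hk₂
    · simp [B, h]
    · simp [B, hk₁, hk₂, Equiv.swap_apply_of_ne_of_ne]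
  rw [hsplit, det_updateCol_add, det_updateCol_smul, det_updateCol_mulVec, hswap, det_permute',
    det_updateCol_mulVec, det_updateCol_mulVec, Equiv.Perm.sign_swap h,
    Function.update_of_ne h.symm]
  push_cast
  ring

theorem mulVec_adjugate_mulVec_single_one (M : Matrix ι ι R) (i : ι) :
    M *ᵥ (adjugate M *ᵥ Pi.single i 1) = M.det • Pi.single i 1 := by
  rw [mulVec_mulVec, mul_adjugate, smul_mulVec, one_mulVec]

end Columns

theorem det_updateCol_single_one {k : ℕ} (A : Matrix (Fin (k + 1)) (Fin (k + 1)) R)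
    (i j : Fin (k + 1)) :
    (A.updateCol j (Pi.single i 1)).det =
      (-1) ^ (i + j : ℕ) * (A.submatrix i.succAbove j.succAbove).det := by
  rw [det_succ_column _ j, Fintype.sum_eq_single i fun l hl => ?_]
  · simp
  · simp [Pi.single_eq_of_ne hl]

theorem det_updateCol_single_one_updateCol_single_one {k : ℕ}
    (A : Matrix (Fin (k + 2)) (Fin (k + 2)) R) (p q : Fin (k + 2)) (i j : Fin (k + 1)) :
    ((A.updateCol (q.succAbove j) (Pi.single (p.succAbove i) 1)).updateCol q
        (Pi.single p 1)).det =
      (-1) ^ (p + q + (i + j) : ℕ) *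
        (A.submatrix (p.succAbove ∘ i.succAbove) (q.succAbove ∘ j.succAbove)).det := by
  rw [det_updateCol_single_one, submatrix_updateCol_of_injective _ _ Fin.succAbove_right_injective,
    Pi.single_comp_succAbove, det_updateCol_single_one, submatrix_submatrix, ← mul_assoc,
    ← pow_add]

theorem det_mul_det_mul_det_submatrix_succAbove_comp_succAbove {n : ℕ}
    (M : Matrix (Fin (n + 2)) (Fin (n + 2)) R) (i₁ i₂ j₁ j₂ : Fin (n + 2)) (hi : i₁ < i₂)
    (hj : j₁ < j₂) :
    M.det * (M.det *
      (M.submatrix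
        (i₂.succAbove ∘ (Fin.mk (i₁ : ℕ) (hi.trans_le (Fin.le_last i₂))).succAbove)
        (j₂.succAbove ∘ (Fin.mk (j₁ : ℕ) (hj.trans_le (Fin.le_last j₂))).succAbove)).det) =
    M.det *
      ((M.submatrix i₁.succAbove j₁.succAbove).det * (M.submatrix i₂.succAbove j₂.succAbove).det -
        (M.submatrix i₁.succAbove j₂.succAbove).det *
          (M.submatrix i₂.succAbove j₁.succAbove).det) := by
  have hrepl := det_updateCol_mulVec_updateCol_mulVec M hj.ne
    (adjugate M *ᵥ Pi.single i₁ 1) (adjugate M *ᵥ Pi.single i₂ 1)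
  rw [mulVec_adjugate_mulVec_single_one, mulVec_adjugate_mulVec_single_one, det_updateCol_smul,
    updateCol_comm _ hj.ne, det_updateCol_smul, updateCol_comm _ hj.ne.symm] at hrepl
  have hi₁ : i₂.succAbove ⟨i₁, by omega⟩ = i₁ := Fin.succAbove_of_castSucc_lt _ _ hi
  have hj₁ : j₂.succAbove ⟨j₁, by omega⟩ = j₁ := Fin.succAbove_of_castSucc_lt _ _ hj
  have hcofactor :=
    det_updateCol_single_one_updateCol_single_one M i₂ j₂ ⟨i₁, by omega⟩ ⟨j₁, by omega⟩
  rw [hi₁, hj₁] at hcofactor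
  simp only [mulVec_single_one, col_apply, adjugate_fin_succ_eq_det_submatrix, hcofactor] at hrepl
  -- the sign `(-1) ^ (i₁ + j₁ + i₂ + j₂)` squares to `1`
  linear_combination (norm := ring_nf) (-1 : R) ^ (i₁ + j₁ + i₂ + j₂ : ℕ) * hrepl
  simp only [pow_mul', neg_one_sq, one_pow]
  ring

end Matrix

/-- The Jacobi (Desnanot–Jacobi) determinant identity:
`det M · M(i₁,i₂;j₁,j₂) = M(i₁;j₁)M(i₂;j₂) - M(i₁;j₂)M(i₂;j₁)` for `i₁<i₂`, `j₁<j₂`,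
where `M(i;j)` denotes the minor deleting row `i` and column `j`. -/
theorem stmt11 {R : Type*} [CommRing R] (n : ℕ) (M : Matrix (Fin (n+2)) (Fin (n+2)) R)
    (i1 i2 j1 j2 : Fin (n+2)) (hi : i1 < i2) (hj : j1 < j2) :
    M.det *
      (M.submatrix
        (i2.succAbove ∘ (Fin.mk (i1:ℕ) (by omega : (i1:ℕ) < n+1)).succAbove)
        (j2.succAbove ∘ (Fin.mk (j1:ℕ) (by omega : (j1:ℕ) < n+1)).succAbove)).det =
    (M.submatrix i1.succAbove j1.succAbove).det * (M.submatrix i2.succAbove j2.succAbove).det -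
    (M.submatrix i1.succAbove j2.succAbove).det * (M.submatrix i2.succAbove j1.succAbove).det := by
  let X := mvPolynomialX (Fin (n+2)) (Fin (n+2)) ℤ
  have hX := mul_left_cancel₀ (det_mvPolynomialX_ne_zero (Fin (n+2)) ℤ)
    (det_mul_det_mul_det_submatrix_succAbove_comp_succAbove X i1 i2 j1 j2 hi hj)
  obtain ⟨φ, rfl⟩ : ∃ φ : MvPolynomial (Fin (n+2) × Fin (n+2)) ℤ →+* R, φ.mapMatrix X = M :=
    ⟨_, mvPolynomialX_mapMatrix_aeval ℤ M⟩
  have hsub (k : ℕ) (r c : Fin k → Fin (n+2)) :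
      ((φ.mapMatrix X).submatrix r c).det = φ (X.submatrix r c).det :=
    (φ.map_det _).symm
  rw [← φ.map_det, hsub, hsub, hsub, hsub, hsub, ← map_mul, ← map_mul, ← map_mul, ← map_sub, hX]
end

section
/- Let m_{i,j}(t) satisfy \partial_t m_{i,j} = \hat{\phi}_i(t) \phi_j(t) for functions \hat{\phi}_i, \phi_j with \partial_t \hat{\phi}_i = \hat{\phi}_{i+1} and \partial_t \phi_j = \phi_{j+1}. Define \tau_n = \det(m_{i,j})_{i,j=0}^{n-1}, \sigma_n = \det of the (n+1)\times(n+1) matrix with rows (m_{i,j})_{i=0..n-1, j=0..n} and bottom row (\phi_0, \ldots, \phi_n), and \hat{\sigma}_n = \det of the matrix with columns (m_{i,j})_{i=0..n, j=0..n-1} and last column (\hat{\phi}_0, \ldots, \hat{\phi}_n)^T. Then the Hirota bilinear equation D_t \tau_{n+1} \cdot \tau_n = \sigma_n \hat{\sigma}_n holds, where D_t f \cdot g = (\partial_t f) g - f (\partial_t g). -/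
/-!
Differentiating `τ_N = det (m i j)_{i,j<N}` column by column, the rank-one form
`∂ₜ m i j = φ̂ i * φ j` gives `τ_N' = ∑ j, φ j * det (m with column j replaced by φ̂)`, which by
the Cauchy expansion along the last row and column is minus the determinant of `m` bordered by the
column `φ̂`, the row `φ` and a zero corner. The bilinear equation is then the Desnanot–Jacobi
identity for the last two rows and columns of the `(n+2) × (n+2)` bordered matrix. Desnanot–Jacobi
is Jacobi's theorem on a `2 × 2` block of the adjugate: `M * [[1, Y₁₂], [0, Y₂₂]]` is block
triangular with diagonal blocks `M₁₁` and `det M • 1` when `Y = adjugate M`, so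
`det M * det Y₂₂ = det M ^ 2 * det M₁₁`, and `det M` cancels for the generic matrix.
-/

open Fin

theorem HasDerivAt.matrix_det {𝕜 ι : Type*} [NontriviallyNormedField 𝕜] [Fintype ι]
    [DecidableEq ι] {M : 𝕜 → Matrix ι ι 𝕜} {M' : Matrix ι ι 𝕜} {t : 𝕜}
    (h : ∀ i j, HasDerivAt (fun s => M s i j) (M' i j) t) :
    HasDerivAt (fun s => (M s).det) (∑ j, ((M t).updateCol j fun i => M' i j).det) t := by
  have hsum := HasDerivAt.fun_sum (u := Finset.univ) fun σ _ =>
    (HasDerivAt.fun_finsetProd (u := Finset.univ) fun i _ => h (σ i) i).const_mul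
      ((Equiv.Perm.sign σ : ℤ) : 𝕜)
  refine (hsum.congr_deriv ?_).congr_of_eventuallyEq (.of_forall fun s => Matrix.det_apply' (M s))
  simp only [Matrix.det_apply', Finset.mul_sum, Matrix.updateCol_apply]
  rw [Finset.sum_comm]
  refine Finset.sum_congr rfl fun j _ => Finset.sum_congr rfl fun σ _ => ?_
  refine congrArg _ (Eq.trans ?_ (Finset.prod_erase_mul _ _ (Finset.mem_univ j)))
  rw [if_pos rfl, smul_eq_mul]
  exact congrArg (· * _)
    (Finset.prod_congr rfl fun i hi => (if_neg (Finset.ne_of_mem_erase hi)).symm)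

theorem Fin.val_succAbove_eq_ite {n : ℕ} (p : Fin (n + 1)) (k : Fin n) :
    (p.succAbove k : ℕ) = if (k : ℕ) < p then (k : ℕ) else k + 1 := by
  unfold succAbove
  split_ifs <;> simp_all [Fin.lt_def]

namespace Matrix

variable {R : Type*} [CommRing R]

section Jacobi

variable {m o : Type*} [Fintype m] [Fintype o] [DecidableEq m] [DecidableEq o]

theorem det_mul_det_toBlocks₂₂_adjugate (M : Matrix (m ⊕ o) (m ⊕ o) R) :
    M.det * M.adjugate.toBlocks₂₂.det = M.det ^ Fintype.card o * M.toBlocks₁₁.det := by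
  set Y := M.adjugate
  have hMY : fromBlocks M.toBlocks₁₁ M.toBlocks₁₂ M.toBlocks₂₁ M.toBlocks₂₂ *
      fromBlocks Y.toBlocks₁₁ Y.toBlocks₁₂ Y.toBlocks₂₁ Y.toBlocks₂₂ =
      fromBlocks (M.det • 1) 0 0 (M.det • 1) := by
    rw [fromBlocks_toBlocks, fromBlocks_toBlocks, mul_adjugate, ← fromBlocks_one]
    simp only [fromBlocks_smul, smul_zero]
  rw [fromBlocks_multiply] at hMY
  obtain ⟨-, h₁₂, -, h₂₂⟩ := fromBlocks_inj.mp hMY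
  have hMC : M * fromBlocks 1 Y.toBlocks₁₂ 0 Y.toBlocks₂₂ =
      fromBlocks M.toBlocks₁₁ 0 M.toBlocks₂₁ (M.det • 1) := by
    conv_lhs => rw [← fromBlocks_toBlocks M]
    rw [fromBlocks_multiply, h₁₂, h₂₂]
    simp
  have hdet := congrArg det hMC
  rw [det_mul, det_fromBlocks_zero₂₁, det_fromBlocks_zero₁₂, det_one, one_mul, det_smul, det_one,
    mul_one] at hdet
  rw [hdet, mul_comm]

theorem det_toBlocks₂₂_adjugate [Nonempty o] (M : Matrix (m ⊕ o) (m ⊕ o) R) :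
    M.adjugate.toBlocks₂₂.det = M.det ^ (Fintype.card o - 1) * M.toBlocks₁₁.det := by
  let X := mvPolynomialX (m ⊕ o) (m ⊕ o) ℤ
  suffices X.adjugate.toBlocks₂₂.det = X.det ^ (Fintype.card o - 1) * X.toBlocks₁₁.det by
    let f := MvPolynomial.aeval (R := ℤ) fun p : (m ⊕ o) × (m ⊕ o) => M p.1 p.2
    rw [← mvPolynomialX_mapMatrix_aeval ℤ M, ← AlgHom.map_adjugate]
    change (f.mapMatrix X.adjugate.toBlocks₂₂).det =
      (f.mapMatrix X).det ^ _ * (f.mapMatrix X.toBlocks₁₁).det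
    rw [← AlgHom.map_det, ← AlgHom.map_det, ← AlgHom.map_det, ← map_pow, ← map_mul, this]
  apply mul_left_cancel₀ (det_mvPolynomialX_ne_zero (m ⊕ o) ℤ)
  rw [det_mul_det_toBlocks₂₂_adjugate, ← mul_assoc, ← pow_succ',
    Nat.sub_add_cancel Fintype.card_pos]

end Jacobi

theorem det_mul_det_submatrix_castSucc_castSucc {n : ℕ}
    (M : Matrix (Fin (n + 2)) (Fin (n + 2)) R) :
    M.det * (M.submatrix (castSucc ∘ castSucc) (castSucc ∘ castSucc)).det =
      (M.submatrix castSucc castSucc).det *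
          (M.submatrix (last n).castSucc.succAbove (last n).castSucc.succAbove).det -
        (M.submatrix (last n).castSucc.succAbove castSucc).det *
          (M.submatrix castSucc (last n).castSucc.succAbove).det := by
  have h := det_toBlocks₂₂_adjugate (M.submatrix finSumFinEquiv finSumFinEquiv)
  rw [adjugate_submatrix_equiv_self, det_submatrix_equiv_self, det_fin_two] at h
  have h₀ : finSumFinEquiv (Sum.inr 0 : Fin n ⊕ Fin 2) = (last n).castSucc := by ext; simp
  have h₁ : finSumFinEquiv (Sum.inr 1 : Fin n ⊕ Fin 2) = last (n + 1) := by ext; simp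
  have h₁₁ : (M.submatrix finSumFinEquiv finSumFinEquiv).toBlocks₁₁ =
      M.submatrix (castSucc ∘ castSucc) (castSucc ∘ castSucc) := by
    ext; simp [toBlocks₁₁]; rfl
  have hsign : ∀ k : ℕ, (-1 : R) ^ (k + k) = 1 := fun k => Even.neg_one_pow ⟨k, rfl⟩
  have hsign₁ : (-1 : R) ^ (n + 1 + n) = -1 := Odd.neg_one_pow ⟨n, by ring⟩
  have hsign₂ : (-1 : R) ^ (n + (n + 1)) = -1 := Odd.neg_one_pow ⟨n, by ring⟩
  simp only [toBlocks₂₂, of_apply, submatrix_apply, h₀, h₁, h₁₁,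
    adjugate_fin_succ_eq_det_submatrix, succAbove_last, Fintype.card_fin, val_last, val_castSucc,
    hsign, hsign₁, hsign₂] at h
  linear_combination -h

theorem det_succ_eq_last_mul_det_sub_sum_updateCol {N : ℕ}
    (B : Matrix (Fin (N + 1)) (Fin (N + 1)) R) :
    B.det = B (last N) (last N) * (B.submatrix castSucc castSucc).det -
      ∑ j : Fin N, B (last N) j.castSucc *
        ((B.submatrix castSucc castSucc).updateCol j fun i => B i.castSucc (last N)).det := by
  rw [det_succ_row B (last N), sum_univ_castSucc]
  simp only [succAbove_last, val_last, val_castSucc]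
  rw [Even.neg_one_pow ⟨N, rfl⟩, one_mul, sub_eq_neg_add, ← Finset.sum_neg_distrib]
  congr 1
  refine Finset.sum_congr rfl fun j _ => ?_
  cases N with
  | zero => exact j.elim0
  | succ N =>
    rw [det_succ_column _ (last N), ← cramer_apply, cramer_eq_adjugate_mulVec, mulVec, dotProduct,
      Finset.mul_sum, Finset.mul_sum, ← Finset.sum_neg_distrib]
    refine Finset.sum_congr rfl fun i _ => ?_
    have hlast : (castSucc j).succAbove (last N) = last (N + 1) :=
      succAbove_ne_last_last (castSucc_ne_last j)
    have hminor : (B.submatrix castSucc (castSucc j).succAbove).submatrix i.succAbove castSucc =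
        (B.submatrix castSucc castSucc).submatrix i.succAbove j.succAbove := by
      ext; simp
    have hsign : (-1 : R) ^ (N + 1 + (j : ℕ)) * (-1) ^ ((i : ℕ) + N) = -(-1) ^ ((i : ℕ) + j) := by
      rw [← pow_add, show N + 1 + (j : ℕ) + (i + N) = i + j + 2 * N + 1 by ring, pow_succ, pow_add,
        pow_mul]
      simp
    simp only [succAbove_last, submatrix_apply, hlast, hminor, adjugate_fin_succ_eq_det_submatrix,
      val_last]
    linear_combination B (last (N + 1)) j.castSucc * B i.castSucc (last (N + 1)) *
      ((B.submatrix castSucc castSucc).submatrix i.succAbove j.succAbove).det * hsign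

theorem hirota_bilinear_det (n : ℕ) (a : ℕ → ℕ → R) (f g : ℕ → R) :
    (∑ j : Fin (n + 1), f j * ((of fun i j : Fin (n + 1) => a i j).updateCol j fun i => g i).det) *
        (of fun i j : Fin n => a i j).det -
      (of fun i j : Fin (n + 1) => a i j).det *
        ∑ j : Fin n, f j * ((of fun i j : Fin n => a i j).updateCol j fun i => g i).det =
    (of fun i j : Fin (n + 1) => if (i : ℕ) < n then a i j else f j).det *
      (of fun i j : Fin (n + 1) => if (j : ℕ) < n then a i j else g i).det := by
  let b : ℕ → ℕ → R := fun i j =>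
    if i ≤ n then (if j ≤ n then a i j else g i) else (if j ≤ n then f j else 0)
  let M : Matrix (Fin (n + 2)) (Fin (n + 2)) R := of fun i j => b i j
  have hτ₀ : M.submatrix (castSucc ∘ castSucc) (castSucc ∘ castSucc) =
      of fun i j : Fin n => a i j := by
    ext i j; simp [M, b]
  have hτ₁ : M.submatrix castSucc castSucc = of fun i j : Fin (n + 1) => a i j := by
    ext i j; simp [M, b, Fin.is_le]
  have hσ : M.submatrix (last n).castSucc.succAbove castSucc =
      of fun i j : Fin (n + 1) => if (i : ℕ) < n then a i j else f j := by
    ext i j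
    have := i.isLt; have := j.isLt
    simp only [M, b, of_apply, submatrix_apply, val_succAbove_eq_ite, val_castSucc, val_last]
    split_ifs <;> first | rfl | omega
  have hσ' : M.submatrix castSucc (last n).castSucc.succAbove =
      of fun i j : Fin (n + 1) => if (j : ℕ) < n then a i j else g i := by
    ext i j
    have := i.isLt; have := j.isLt
    simp only [M, b, of_apply, submatrix_apply, val_succAbove_eq_ite, val_castSucc, val_last]
    split_ifs <;> first | rfl | omega
  have hdet : M.det =
      -∑ j : Fin (n + 1), f j * ((of fun i j : Fin (n + 1) => a i j).updateCol j fun i => g i).det := by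
    rw [det_succ_eq_last_mul_det_sub_sum_updateCol, hτ₁]
    simp [M, b, Fin.is_le]
  have hdet' : (M.submatrix (last n).castSucc.succAbove (last n).castSucc.succAbove).det =
      -∑ j : Fin n, f j * ((of fun i j : Fin n => a i j).updateCol j fun i => g i).det := by
    have hskip : (last n).castSucc.succAbove ∘ castSucc = castSucc ∘ (castSucc : Fin n → _) := by
      funext k; simp
    rw [det_succ_eq_last_mul_det_sub_sum_updateCol, submatrix_submatrix, hskip, hτ₀]
    simp [M, b]
  have hjacobi := det_mul_det_submatrix_castSucc_castSucc M
  rw [hdet, hτ₀, hτ₁, hdet', hσ, hσ'] at hjacobi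
  linear_combination -hjacobi

end Matrix

theorem stmt12_general (n : ℕ) (m : ℝ → ℕ → ℕ → ℝ) (φ φh : ℝ → ℕ → ℝ)
    (hm : ∀ (t : ℝ) (i j : ℕ), HasDerivAt (fun s => m s i j) (φh t i * φ t j) t)
    (t : ℝ) :
    deriv (fun s => (Matrix.of fun i j : Fin (n+1) => m s i j).det) t *
        (Matrix.of fun i j : Fin n => m t i j).det -
      (Matrix.of fun i j : Fin (n+1) => m t i j).det *
        deriv (fun s => (Matrix.of fun i j : Fin n => m s i j).det) t =
    (Matrix.of fun i j : Fin (n+1) =>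
        if (i:ℕ) < n then m t i j else φ t j).det *
    (Matrix.of fun i j : Fin (n+1) =>
        if (j:ℕ) < n then m t i j else φh t i).det := by
  have hτ : ∀ N : ℕ, HasDerivAt (fun s => (Matrix.of fun i j : Fin N => m s i j).det)
      (∑ j : Fin N, φ t j * ((Matrix.of fun i j : Fin N => m t i j).updateCol j
        fun i => φh t i).det) t := by
    intro N
    refine (HasDerivAt.matrix_det fun i j : Fin N => hm t i j).congr_deriv
      (Finset.sum_congr rfl fun j _ => ?_)
    rw [← Matrix.det_updateCol_smul]
    congr 2
    exact funext fun i => mul_comm _ _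
  rw [(hτ (n + 1)).deriv, (hτ n).deriv]
  exact Matrix.hirota_bilinear_det n (m t) (φ t) (φh t)

/-- The Hirota bilinear equation `D_t τ_{n+1}·τ_n = σ_n σ̂_n` for Gram determinants
with rank-one entry derivatives `∂_t m_{i,j} = φ̂_i φ_j`, `∂_t φ_j = φ_{j+1}`,
`∂_t φ̂_i = φ̂_{i+1}`. -/
theorem stmt12 (n : ℕ) (m : ℝ → ℕ → ℕ → ℝ) (φ φh : ℝ → ℕ → ℝ)
    (hm : ∀ (t : ℝ) (i j : ℕ), HasDerivAt (fun s => m s i j) (φh t i * φ t j) t)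
    (hφ : ∀ (t : ℝ) (j : ℕ), HasDerivAt (fun s => φ s j) (φ t (j+1)) t)
    (hφh : ∀ (t : ℝ) (i : ℕ), HasDerivAt (fun s => φh s i) (φh t (i+1)) t)
    (t : ℝ) :
    deriv (fun s => (Matrix.of fun i j : Fin (n+1) => m s i j).det) t *
        (Matrix.of fun i j : Fin n => m t i j).det -
      (Matrix.of fun i j : Fin (n+1) => m t i j).det *
        deriv (fun s => (Matrix.of fun i j : Fin n => m s i j).det) t =
    (Matrix.of fun i j : Fin (n+1) =>
        if (i:ℕ) < n then m t i j else φ t j).det *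
    (Matrix.of fun i j : Fin (n+1) =>
        if (j:ℕ) < n then m t i j else φh t i).det :=
  stmt12_general n m φ φh hm t
end

section
/- With the same setup (\partial_t m_{i,j} = \hat{\phi}_i \phi_j, \partial_t \phi_j = \phi_{j+1}, \partial_t \hat{\phi}_i = \hat{\phi}_{i+1}), define \xi_n = \det(m_{i,j}) over rows i \in \{0,\ldots,n-2,n\} and columns j \in \{0,\ldots,n-1\}, \tau_n = \det(m_{i,j})_{i,j=0}^{n-1}, \hat{\sigma}_n as the (n+1)\times(n+1) determinant with columns (m_{i,j})_{j=0..n-1} and last column \hat{\phi}_i for i = 0..n, and \sigma_{n-1} as the n\times n determinant with rows (m_{i,j})_{i=0..n-2} over columns j=0..n-1 and bottom row (\phi_0,\ldots,\phi_{n-1}). Then D_t \xi_n \cdot \tau_n = \hat{\sigma}_n \sigma_{n-1}. -/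
/-!
By Jacobi's formula, a Gram-type determinant whose entries have the rank-one derivative
`φ̂ᵢ φⱼ` has derivative `∑ᵢ φ̂ᵢ · det (m with row i replaced by φ)`, which is minus the
determinant of `m` bordered by the column `φ̂`, the row `φ` and the corner `0`. Hence all four
determinants `ξ_n, τ_n, ξ_n', τ_n'` are minors of the single matrix
`M = [[m, φ̂, 0], [φ, 0, 1]]` (rows `0, …, n` of `m`) obtained by deleting one of the rows
`n - 1, n` and one of the last two columns, while `det M = σ̂_n` and deleting both pairs leaves
`σ_{n-1}`. The bilinear equation is then the Desnanot–Jacobi identity for `M`, which is the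
`2 × 2` case of Jacobi's complementary minor theorem; the latter follows from
`A * adj A = det A • 1` for the generic matrix, whose determinant can be cancelled.
-/

open Matrix Finset Equiv

theorem Fin.val_succAbove {N : ℕ} (p : Fin (N + 1)) (i : Fin N) :
    (p.succAbove i : ℕ) = if (i : ℕ) < p then (i : ℕ) else (i : ℕ) + 1 := by
  rcases lt_or_ge i.castSucc p with h | h
  · rw [Fin.succAbove_of_castSucc_lt _ _ h, if_pos (by simpa [Fin.lt_def] using h),
      Fin.val_castSucc]
  · rw [Fin.succAbove_of_le_castSucc _ _ h, if_neg (by simpa [Fin.le_def] using h),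
      Fin.val_succ]

namespace Matrix

variable {R : Type*} [CommRing R]

theorem hasDerivAt_det {𝕜 n : Type*} [NontriviallyNormedField 𝕜] [Fintype n] [DecidableEq n]
    {A : 𝕜 → Matrix n n 𝕜} {A' : Matrix n n 𝕜} {t : 𝕜}
    (h : ∀ i j, HasDerivAt (fun s => A s i j) (A' i j) t) :
    HasDerivAt (fun s => (A s).det) (∑ i, ((A t).updateRow i (A' i)).det) t := by
  have det_eq (M : Matrix n n 𝕜) : M.det = ∑ σ : Perm n, (Perm.sign σ : 𝕜) * ∏ i, M i (σ i) := by
    rw [← det_transpose, det_apply']; rfl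
  have prod_updateRow (σ : Perm n) (i : n) :
      ∏ j, (A t).updateRow i (A' i) j (σ j) = (∏ j ∈ univ.erase i, A t j (σ j)) * A' i (σ i) := by
    rw [← prod_erase_mul _ _ (mem_univ i), updateRow_self]
    congr 1
    exact prod_congr rfl fun j hj => by rw [updateRow_ne (ne_of_mem_erase hj)]
  simp only [det_eq, prod_updateRow, sum_comm (γ := n), ← mul_sum]
  exact HasDerivAt.fun_sum fun σ _ => by
    simpa [smul_eq_mul] using (HasDerivAt.fun_finsetProd fun i _ => h i (σ i)).const_mul _

theorem det_eq_of_col_eq_ite {N : ℕ} (A : Matrix (Fin (N + 1)) (Fin (N + 1)) R)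
    {i j : Fin (N + 1)} (h : ∀ i', A i' j = if i' = i then 1 else 0) :
    A.det = (-1) ^ (i + j : ℕ) * (A.submatrix i.succAbove j.succAbove).det := by
  rw [det_succ_column A j, sum_eq_single i (fun i' _ hi' => by simp [h, hi']) (by simp), h,
    if_pos rfl, mul_one]

theorem det_bordered {N : ℕ} (T : Matrix (Fin (N + 1)) (Fin (N + 1)) R) (u v : Fin (N + 1) → R)
    (B : Matrix (Fin (N + 2)) (Fin (N + 2)) R)
    (hT : ∀ i j, B i.castSucc j.castSucc = T i j) (hu : ∀ i, B i.castSucc (Fin.last _) = u i)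
    (hv : ∀ j, B (Fin.last _) j.castSucc = v j) (h0 : B (Fin.last _) (Fin.last _) = 0) :
    B.det = -∑ i, u i * (T.updateRow i v).det := by
  rw [det_succ_column B (Fin.last _), Fin.sum_univ_castSucc, h0, mul_zero, zero_mul, add_zero,
    ← sum_neg_distrib]
  refine sum_congr rfl fun i _ => ?_
  rw [hu, det_succ_row (T.updateRow i v) i, det_succ_row _ (Fin.last N), mul_sum, mul_sum,
    ← sum_neg_distrib]
  refine sum_congr rfl fun j _ => ?_
  have hminor : ((B.submatrix i.castSucc.succAbove (Fin.last (N + 1)).succAbove).submatrix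
      (Fin.last N).succAbove j.succAbove) = T.submatrix i.succAbove j.succAbove := by
    ext a b
    simp [Fin.castSucc_succAbove_castSucc, hT]
  have hrow : i.castSucc.succAbove (Fin.last N) = Fin.last (N + 1) :=
    Fin.succAbove_ne_last_last (Fin.castSucc_lt_last i).ne
  have hsign : (-1 : R) ^ (i + (N + 1) : ℕ) * (-1) ^ (N + j : ℕ) = -(-1) ^ (i + j : ℕ) := by
    rw [← pow_add, show (i + (N + 1) + (N + j) : ℕ) = i + j + 2 * N + 1 by ring, pow_succ,
      pow_add, pow_mul]
    simp
  rw [hminor, submatrix_apply, hrow, Fin.succAbove_last, hv, updateRow_self,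
    submatrix_updateRow_succAbove, Fin.val_castSucc, Fin.val_last, Fin.val_last]
  linear_combination (u i * v j * (T.submatrix i.succAbove j.succAbove).det) * hsign

theorem det_mul_det_toBlocks₂₂_adjugate_s13 {m n : Type*} [Fintype m] [Fintype n] [DecidableEq m]
    [DecidableEq n] (A : Matrix (m ⊕ n) (m ⊕ n) R) :
    A.det * (adjugate A).toBlocks₂₂.det = A.det ^ Fintype.card n * A.toBlocks₁₁.det := by
  have hmul : A * fromBlocks 1 (adjugate A).toBlocks₁₂ 0 (adjugate A).toBlocks₂₂ =
      fromBlocks A.toBlocks₁₁ 0 A.toBlocks₂₁ (A.det • 1) := by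
    ext i (j | j)
    · rcases i with i | i <;>
        simp [mul_apply, Fintype.sum_sum_type, one_apply, toBlocks₁₁, toBlocks₂₁]
    · have h := congr_fun (congr_fun (mul_adjugate A) i) (Sum.inr j)
      rcases i with i | i <;>
        simpa [mul_apply, Fintype.sum_sum_type, one_apply, toBlocks₁₂, toBlocks₂₂] using h
  have h := congr_arg det hmul
  rwa [det_mul, det_fromBlocks_zero₂₁, det_fromBlocks_zero₁₂, det_one, one_mul, det_smul,
    det_one, mul_one, mul_comm (A.toBlocks₁₁.det)] at h

/-- Jacobi's complementary minor theorem. -/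
theorem det_toBlocks₂₂_adjugate_s13 {m n : Type*} [Fintype m] [Fintype n] [DecidableEq m]
    [DecidableEq n] [Nonempty n] (A : Matrix (m ⊕ n) (m ⊕ n) R) :
    (adjugate A).toBlocks₂₂.det = A.det ^ (Fintype.card n - 1) * A.toBlocks₁₁.det := by
  let X := mvPolynomialX (m ⊕ n) (m ⊕ n) ℤ
  suffices (adjugate X).toBlocks₂₂.det = X.det ^ (Fintype.card n - 1) * X.toBlocks₁₁.det by
    set f := MvPolynomial.aeval (R := ℤ) fun p : (m ⊕ n) × (m ⊕ n) => A p.1 p.2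
    have hX : f.mapMatrix X = A := mvPolynomialX_mapMatrix_aeval ℤ A
    have h := congr_arg f this
    rw [map_mul, map_pow, AlgHom.map_det, AlgHom.map_det, AlgHom.map_det] at h
    rw [← hX, ← AlgHom.map_adjugate]
    exact h
  refine mul_left_cancel₀ (det_mvPolynomialX_ne_zero (m ⊕ n) ℤ) ?_
  rw [det_mul_det_toBlocks₂₂_adjugate_s13, ← mul_assoc, ← pow_succ',
    Nat.sub_add_cancel Fintype.card_pos]

theorem desnanot_jacobi {k : ℕ} (A : Matrix (Fin (k + 2)) (Fin (k + 2)) R) :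
    A.det * (A.submatrix (Fin.castAdd 2) (Fin.castAdd 2)).det =
      (A.submatrix (Fin.last k).castSucc.succAbove (Fin.last k).castSucc.succAbove).det *
          (A.submatrix (Fin.last (k + 1)).succAbove (Fin.last (k + 1)).succAbove).det -
        (A.submatrix (Fin.last k).castSucc.succAbove (Fin.last (k + 1)).succAbove).det *
          (A.submatrix (Fin.last (k + 1)).succAbove (Fin.last k).castSucc.succAbove).det := by
  have h := det_toBlocks₂₂_adjugate_s13 (A.submatrix finSumFinEquiv finSumFinEquiv)
  rw [adjugate_submatrix_equiv_self, det_submatrix_equiv_self, det_fin_two] at h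
  have h0 : finSumFinEquiv (Sum.inr 0 : Fin k ⊕ Fin 2) = (Fin.last k).castSucc := by ext; simp
  have h1 : finSumFinEquiv (Sum.inr 1 : Fin k ⊕ Fin 2) = Fin.last (k + 1) := by ext; simp
  have hinner : (of fun i j => A (finSumFinEquiv (Sum.inl i : Fin k ⊕ Fin 2))
      (finSumFinEquiv (Sum.inl j : Fin k ⊕ Fin 2))) =
        A.submatrix (Fin.castAdd 2) (Fin.castAdd 2) := by
    ext; simp
  have hodd : (-1 : R) ^ (k + 1 + k) = -1 := Odd.neg_one_pow ⟨k, by ring⟩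
  simp only [toBlocks₂₂, toBlocks₁₁, of_apply, submatrix_apply, h0, h1, hinner,
    adjugate_fin_succ_eq_det_submatrix, Fin.val_last, Fin.val_castSucc, Fintype.card_fin,
    Even.neg_one_pow ⟨k, rfl⟩, Even.neg_one_pow ⟨k + 1, rfl⟩, add_comm k (k + 1),
    hodd, Nat.add_one_sub_one, pow_one] at h
  linear_combination -h

end Matrix

section CauchyToda

variable {R : Type*} [CommRing R] (k : ℕ) (m : ℕ → ℕ → R) (φ φh : ℕ → R)

/-- Rows: the `m`-rows `0, …, k - 1`, the row `φ`, the `m`-rows `a` and `b`. Columns: the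
`m`-columns `0, …, k`, the column `φh`, and a unit column whose `1` sits in the `φ`-row. The
`φ`-row comes before `a` and `b` so that the Desnanot–Jacobi identity for the last two rows and
columns applies. -/
def borderedGramMatrix (a b : ℕ) : Matrix (Fin (k + 3)) (Fin (k + 3)) R :=
  of fun i j =>
    if (i : ℕ) = k then (if (j : ℕ) ≤ k then φ j else if (j : ℕ) = k + 1 then 0 else 1)
    else
      let r := if (i : ℕ) < k then (i : ℕ) else if (i : ℕ) = k + 1 then a else b
      if (j : ℕ) ≤ k then m r j else if (j : ℕ) = k + 1 then φh r else 0

theorem borderedGramMatrix_submatrix_succAbove_castSucc_last (a b : ℕ)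
    (c : Fin (k + 2) → Fin (k + 3)) :
    (borderedGramMatrix k m φ φh a b).submatrix (Fin.last (k + 1)).castSucc.succAbove c =
      (borderedGramMatrix k m φ φh b a).submatrix (Fin.last (k + 2)).succAbove c := by
  ext i j
  have := i.isLt
  simp only [borderedGramMatrix, submatrix_apply, of_apply, Fin.val_succAbove, Fin.val_castSucc,
    Fin.val_last]
  split_ifs <;> first | rfl | omega

theorem det_borderedGramMatrix_submatrix_last_castSucc_last (a b : ℕ) :
    ((borderedGramMatrix k m φ φh a b).submatrix (Fin.last (k + 2)).succAbove
      (Fin.last (k + 1)).castSucc.succAbove).det =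
      -(of fun i j : Fin (k + 1) => m (if (i : ℕ) = k then a else i) j).det := by
  rw [det_eq_of_col_eq_ite _ (i := ⟨k, by omega⟩) (j := Fin.last (k + 1))]
  · rw [show ((⟨k, by omega⟩ : Fin (k + 3)) + Fin.last (k + 1) : ℕ) = 2 * k + 1 by simp; ring,
      pow_succ, pow_mul, neg_one_sq, one_pow, one_mul, neg_one_mul]
    congr 2
    ext i j
    have := i.isLt
    simp only [borderedGramMatrix, submatrix_apply, of_apply, Fin.val_succAbove,
      Fin.val_castSucc, Fin.val_last]
    split_ifs <;> first | rfl | omega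
  · intro i
    have := i.isLt
    simp only [borderedGramMatrix, submatrix_apply, of_apply, Fin.val_succAbove,
      Fin.val_castSucc, Fin.val_last, Fin.ext_iff]
    split_ifs <;> first | rfl | omega

theorem det_borderedGramMatrix_submatrix_last_last (a b : ℕ) :
    ((borderedGramMatrix k m φ φh a b).submatrix (Fin.last (k + 2)).succAbove
      (Fin.last (k + 2)).succAbove).det =
      ∑ i : Fin (k + 1), φh (if (i : ℕ) = k then a else i) *
        ((of fun i j : Fin (k + 1) => m (if (i : ℕ) = k then a else i) j).updateRow i
          fun j => φ j).det := by
  set S := (borderedGramMatrix k m φ φh a b).submatrix (Fin.last (k + 2)).succAbove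
    (Fin.last (k + 2)).succAbove
  let σ := swap (⟨k, by omega⟩ : Fin (k + 2)) (Fin.last (k + 1))
  have hσ (i : Fin (k + 1)) : (σ i.castSucc : ℕ) = if (i : ℕ) = k then k + 1 else i := by
    have := i.isLt
    simp only [σ, swap_apply_def, Fin.ext_iff, apply_ite Fin.val, Fin.val_castSucc,
      Fin.val_last]
    split_ifs <;> omega
  have hσ_last : σ (Fin.last (k + 1)) = ⟨k, by omega⟩ := swap_apply_right _ _
  have hswap : S.det = -(S.submatrix σ id).det := by
    rw [det_permute, Perm.sign_swap (by simp [Fin.ext_iff])]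
    simp
  rw [hswap, det_bordered _ (fun i => φh (if (i : ℕ) = k then a else i)) (fun j => φ j),
    neg_neg]
  all_goals
    intros
    simp only [S, borderedGramMatrix, submatrix_apply, of_apply, id, hσ_last, Fin.succAbove_last,
      Fin.val_castSucc, Fin.val_last, hσ]
    split_ifs <;> first | rfl | omega

theorem det_borderedGramMatrix :
    (borderedGramMatrix k m φ φh k (k + 1)).det =
      (of fun i j : Fin (k + 1 + 1) => if (j : ℕ) < k + 1 then m i j else φh i).det := by
  rw [det_eq_of_col_eq_ite _ (i := ⟨k, by omega⟩) (j := Fin.last (k + 2))]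
  · rw [show ((⟨k, by omega⟩ : Fin (k + 3)) + Fin.last (k + 2) : ℕ) = 2 * (k + 1) by simp; ring,
      pow_mul, neg_one_sq, one_pow, one_mul]
    congr 1
    ext i j
    have := i.isLt
    have := j.isLt
    simp only [borderedGramMatrix, submatrix_apply, of_apply, Fin.val_succAbove, Fin.val_last]
    split_ifs <;> first | rfl | omega | (congr 1; omega)
  · intro i
    have := i.isLt
    simp only [borderedGramMatrix, of_apply, Fin.val_last, Fin.ext_iff]
    split_ifs <;> first | rfl | omega

theorem borderedGramMatrix_submatrix_castAdd (a b : ℕ) :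
    (borderedGramMatrix k m φ φh a b).submatrix (Fin.castAdd 2) (Fin.castAdd 2) =
      of fun i j : Fin (k + 1) => if (i : ℕ) < k then m i j else φ j := by
  ext i j
  have := i.isLt
  have := j.isLt
  simp only [borderedGramMatrix, submatrix_apply, of_apply, Fin.val_castAdd]
  split_ifs <;> first | rfl | omega

theorem gram_bilinear_identity :
    (∑ i : Fin (k + 1), φh (if (i : ℕ) = k then k + 1 else i) *
        ((of fun i j : Fin (k + 1) => m (if (i : ℕ) = k then k + 1 else i) j).updateRow i
          fun j => φ j).det) * (of fun i j : Fin (k + 1) => m i j).det -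
      (of fun i j : Fin (k + 1) => m (if (i : ℕ) = k then k + 1 else i) j).det *
        (∑ i : Fin (k + 1), φh i * ((of fun i j : Fin (k + 1) => m i j).updateRow i
          fun j => φ j).det) =
    (of fun i j : Fin (k + 1 + 1) => if (j : ℕ) < k + 1 then m i j else φh i).det *
      (of fun i j : Fin (k + 1) => if (i : ℕ) < k then m i j else φ j).det := by
  have h := desnanot_jacobi (borderedGramMatrix k m φ φh k (k + 1))
  rw [det_borderedGramMatrix, borderedGramMatrix_submatrix_castAdd,
    borderedGramMatrix_submatrix_succAbove_castSucc_last,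
    borderedGramMatrix_submatrix_succAbove_castSucc_last,
    det_borderedGramMatrix_submatrix_last_castSucc_last,
    det_borderedGramMatrix_submatrix_last_last,
    det_borderedGramMatrix_submatrix_last_castSucc_last,
    det_borderedGramMatrix_submatrix_last_last] at h
  have hrow (i : Fin (k + 1)) : (if (i : ℕ) = k then k else (i : ℕ)) = i := by
    split_ifs with hi <;> simp [hi]
  simp only [hrow] at h
  linear_combination -h

end CauchyToda

theorem hasDerivAt_det_gram {𝕜 : Type*} [NontriviallyNormedField 𝕜] {N : ℕ} (ρ : Fin N → ℕ)
    {m : 𝕜 → ℕ → ℕ → 𝕜} {φ φh : 𝕜 → ℕ → 𝕜} {t : 𝕜}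
    (hm : ∀ i j, HasDerivAt (fun s => m s i j) (φh t i * φ t j) t) :
    HasDerivAt (fun s => (of fun i j : Fin N => m s (ρ i) j).det)
      (∑ i, φh t (ρ i) *
        ((of fun i j : Fin N => m t (ρ i) j).updateRow i fun j : Fin N => φ t j).det) t := by
  convert hasDerivAt_det (A := fun s => of fun i j : Fin N => m s (ρ i) j)
    (A' := of fun i j : Fin N => φh t (ρ i) * φ t j) (fun i j => hm (ρ i) j) using 1
  refine sum_congr rfl fun i _ => ?_
  rw [← det_updateRow_smul]
  rfl

theorem stmt13_general (n : ℕ) (hn : 1 ≤ n) (m : ℝ → ℕ → ℕ → ℝ) (φ φh : ℝ → ℕ → ℝ)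
    (hm : ∀ (t : ℝ) (i j : ℕ), HasDerivAt (fun s => m s i j) (φh t i * φ t j) t)
    (t : ℝ) :
    deriv (fun s =>
        (Matrix.of fun i j : Fin n => m s (if (i:ℕ) = n - 1 then n else (i:ℕ)) j).det) t *
        (Matrix.of fun i j : Fin n => m t i j).det -
      (Matrix.of fun i j : Fin n => m t (if (i:ℕ) = n - 1 then n else (i:ℕ)) j).det *
        deriv (fun s => (Matrix.of fun i j : Fin n => m s i j).det) t =
    (Matrix.of fun i j : Fin (n+1) =>
        if (j:ℕ) < n then m t i j else φh t i).det *
    (Matrix.of fun i j : Fin n =>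
        if (i:ℕ) < n - 1 then m t i j else φ t j).det := by
  obtain ⟨k, rfl⟩ : ∃ k, n = k + 1 := ⟨n - 1, by omega⟩
  simp only [Nat.add_sub_cancel]
  rw [(hasDerivAt_det_gram (fun i : Fin (k + 1) => if (i : ℕ) = k then k + 1 else i)
      (hm t)).deriv, (hasDerivAt_det_gram (fun i : Fin (k + 1) => (i : ℕ)) (hm t)).deriv]
  exact gram_bilinear_identity k (m t) (φ t) (φh t)

/-- The Hirota bilinear equation `D_t ξ_n·τ_n = σ̂_n σ_{n-1}` for the asymmetric
Cauchy–Toda Gram determinants, where `ξ_n` is the determinant with row index `n-1`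
replaced by `n`, `σ̂_n` is the determinant bordered by the column `φ̂`, and `σ_{n-1}`
is the determinant bordered by the bottom row `φ`. -/
theorem stmt13 (n : ℕ) (hn : 1 ≤ n) (m : ℝ → ℕ → ℕ → ℝ) (φ φh : ℝ → ℕ → ℝ)
    (hm : ∀ (t : ℝ) (i j : ℕ), HasDerivAt (fun s => m s i j) (φh t i * φ t j) t)
    (hφ : ∀ (t : ℝ) (j : ℕ), HasDerivAt (fun s => φ s j) (φ t (j+1)) t)
    (hφh : ∀ (t : ℝ) (i : ℕ), HasDerivAt (fun s => φh s i) (φh t (i+1)) t)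
    (t : ℝ) :
    deriv (fun s =>
        (Matrix.of fun i j : Fin n => m s (if (i:ℕ) = n - 1 then n else (i:ℕ)) j).det) t *
        (Matrix.of fun i j : Fin n => m t i j).det -
      (Matrix.of fun i j : Fin n => m t (if (i:ℕ) = n - 1 then n else (i:ℕ)) j).det *
        deriv (fun s => (Matrix.of fun i j : Fin n => m s i j).det) t =
    (Matrix.of fun i j : Fin (n+1) =>
        if (j:ℕ) < n then m t i j else φh t i).det *
    (Matrix.of fun i j : Fin n =>
        if (i:ℕ) < n - 1 then m t i j else φ t j).det :=
  stmt13_general n hn m φ φh hm t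
end

section
/- Let m_{i,j} = \int\int x^i y^j/(x+y) d\mu_1(x) d\mu_2(y) and \phi_j = \int y^j d\mu_2(y) for non-negative measures on \mathbb{R}_+ with all moments finite. Then the (n+1)\times(n+1) determinant \sigma_n = \det\begin{pmatrix} (m_{i,j})_{i=0..n-1, j=0..n} \\ (\phi_j)_{j=0..n} \end{pmatrix} equals \frac{1}{n!(n+1)!} \int_{\mathbb{R}_+^n \times \mathbb{R}_+^{n+1}} \frac{\Delta_n^2(x) \Delta_{n+1}^2(y)}{\prod_{j=1}^n \prod_{k=1}^{n+1} (x_j + y_k)} \prod_{j=1}^n d\mu_1(x_j) \prod_{k=1}^{n+1} d\mu_2(y_k). -/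
/-!
Let `sampleMatrix x y` have rows `x_i^i y_i^k / (x_i + y_i)` for `i < n` and last row `y_n^k`.
Its rows depend on independent variables, so by multilinearity its determinant has integral `σ_n`.
Pulling the row factors out of the Vandermonde matrix of `y`, its determinant is
`Δ_{n+1}(y) ∏_i x_i^i / (x_i + y_i)`; summing over the permutations of `y` yields the bordered
Cauchy determinant `Δ_n(x) Δ_{n+1}(y) / ∏ (x_j + y_k)`, and summing then over the permutations of
`x` yields the Leibniz expansion of a second `Δ_n(x)`. The product measure is invariant under these
permutations, so `Δ_n(x)² Δ_{n+1}(y)² / ∏ (x_j + y_k)` has integral `n! (n+1)! σ_n`.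
-/

open Finset Matrix Polynomial MeasureTheory

section Determinants

variable {R : Type*} [CommRing R] {n : ℕ}

theorem det_of_snoc (r : Fin n → Fin (n + 1) → R) (s : Fin (n + 1) → R) :
    (of (Fin.snoc r s)).det = ∑ σ : Equiv.Perm (Fin (n + 1)),
      Equiv.Perm.sign σ * ((∏ i, r i (σ i.castSucc)) * s (σ (Fin.last n))) := by
  rw [← det_transpose, det_apply']
  simp [Fin.prod_univ_castSucc]

theorem det_vandermonde_comp_perm (v : Fin n → R) (σ : Equiv.Perm (Fin n)) :
    (vandermonde (v ∘ σ)).det = Equiv.Perm.sign σ * (vandermonde v).det :=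
  det_permute σ (vandermonde v)

theorem prod_prod_compl_sub_eq_det_vandermonde_mul (y : Fin n → R) :
    ∏ l, ∏ k ∈ {l}ᶜ, (y k - y l) = (vandermonde y).det * (vandermonde (-y)).det := by
  rw [← prod_prod_Ioi_mul_eq_prod_prod_off_diag, det_vandermonde, det_vandermonde,
    ← prod_mul_distrib]
  refine prod_congr rfl fun l _ => ?_
  rw [← prod_mul_distrib]
  refine prod_congr rfl fun k _ => ?_
  simp only [Pi.neg_apply]
  ring

noncomputable def borderedVandermonde (x : Fin n → R) : Matrix (Fin (n + 1)) (Fin (n + 1)) R :=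
  of (Fin.snoc (fun i j => x i ^ (j : ℕ)) (Pi.single (Fin.last n) 1))

theorem det_borderedVandermonde (x : Fin n → R) :
    (borderedVandermonde x).det = (vandermonde x).det := by
  rw [det_succ_row _ (Fin.last n), Fintype.sum_eq_single (Fin.last n)]
  · have hminor : (borderedVandermonde x).submatrix Fin.castSucc Fin.castSucc = vandermonde x := by
      ext i j
      simp [borderedVandermonde]
    simp only [Fin.succAbove_last, hminor]
    simp [borderedVandermonde, ← two_mul]
  · intro j hj
    simp [borderedVandermonde, hj]

theorem sum_pow_mul_coeff {N : ℕ} {p : R[X]} (hp : p.natDegree < N) (x : R) :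
    ∑ j : Fin N, x ^ (j : ℕ) * p.coeff j = p.eval x := by
  rw [eval_eq_sum_range' hp, ← Fin.sum_univ_eq_sum_range (fun j => p.coeff j * x ^ j)]
  simp only [mul_comm]

noncomputable def cauchyPoly (y : Fin n → R) (k : Fin n) : R[X] :=
  ∏ l ∈ {k}ᶜ, (X + C (y l))

theorem cauchyPoly_monic (y : Fin n → R) (k : Fin n) : (cauchyPoly y k).Monic :=
  monic_prod_of_monic _ _ fun l _ => monic_X_add_C (y l)

theorem natDegree_cauchyPoly [Nontrivial R] (y : Fin (n + 1) → R) (k : Fin (n + 1)) :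
    (cauchyPoly y k).natDegree = n := by
  rw [cauchyPoly, natDegree_prod_of_monic _ _ fun l _ => monic_X_add_C (y l)]
  simp [card_compl]

theorem eval_cauchyPoly (y : Fin n → R) (k : Fin n) (t : R) :
    (cauchyPoly y k).eval t = ∏ l ∈ {k}ᶜ, (t + y l) := by
  simp [cauchyPoly, eval_prod]

-- For injective `y`, evaluating the polynomials `cauchyPoly y k` at the points `-y l` diagonalizes.
theorem det_coeff_cauchyPoly [IsDomain R] (y : Fin n → R) :
    (of fun (j k : Fin n) => (cauchyPoly y k).coeff j).det = (vandermonde y).det := by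
  by_cases hy : Function.Injective y
  swap
  · obtain ⟨a, b, hab, hne⟩ := Function.not_injective_iff.1 hy
    have hcol : cauchyPoly y a = cauchyPoly y b := by
      rw [cauchyPoly, ← mul_prod_erase _ _ (mem_compl.2 (notMem_singleton.2 hne.symm)),
        cauchyPoly, ← mul_prod_erase _ _ (mem_compl.2 (notMem_singleton.2 hne)), hab]
      congr 2
      ext
      simp [and_comm]
    rw [det_zero_of_column_eq hne fun j => by simp [hcol],
      det_vandermonde_eq_zero_iff.2 ⟨a, b, hab, hne⟩]
  obtain _ | n := n
  · simp
  have hdiag : vandermonde (-y) * of (fun (j k : Fin (n + 1)) => (cauchyPoly y k).coeff j) =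
      diagonal fun l => ∏ k ∈ {l}ᶜ, (y k - y l) := by
    ext l k
    simp only [mul_apply, vandermonde_apply, of_apply]
    rw [sum_pow_mul_coeff ((natDegree_cauchyPoly y k).trans_lt n.lt_succ_self), eval_cauchyPoly]
    by_cases hlk : l = k
    · subst hlk
      simp [neg_add_eq_sub]
    · rw [diagonal_apply_ne _ hlk]
      exact prod_eq_zero (mem_compl.2 (notMem_singleton.2 hlk)) (neg_add_cancel (y l))
  have hdet := congrArg det hdiag
  rw [det_mul, det_diagonal, prod_prod_compl_sub_eq_det_vandermonde_mul,
    mul_comm (vandermonde y).det] at hdet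
  exact mul_left_cancel₀ (det_vandermonde_ne_zero_iff.2 (neg_injective.comp hy)) hdet

noncomputable def borderedCauchy {K : Type*} [Field K] (x : Fin n → K) (y : Fin (n + 1) → K) :
    Matrix (Fin (n + 1)) (Fin (n + 1)) K :=
  of (Fin.snoc (fun j k => (x j + y k)⁻¹) 1)

/- Clearing the denominator of row `j` leaves the values `(cauchyPoly y k).eval (x j)`; the last
row consists of their leading coefficients. -/
theorem det_borderedCauchy {K : Type*} [Field K] (x : Fin n → K) (y : Fin (n + 1) → K)
    (hxy : ∀ j k, x j + y k ≠ 0) :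
    (borderedCauchy x y).det =
      (vandermonde x).det * (vandermonde y).det / ∏ j, ∏ k, (x j + y k) := by
  set A := of fun (l k : Fin (n + 1)) => (cauchyPoly y k).coeff l
  set c : Fin (n + 1) → K := Fin.snoc (fun j => (∏ k, (x j + y k))⁻¹) 1
  have hfactor : borderedCauchy x y = of fun i k => c i * (borderedVandermonde x * A) i k := by
    ext i k
    induction i using Fin.lastCases with
    | last =>
      simp only [borderedCauchy, borderedVandermonde, of_apply, Fin.snoc_last, mul_apply, c, A,
        one_mul]
      rw [Fintype.sum_eq_single (Fin.last n) fun l hl => by simp [hl]]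
      simp [← natDegree_cauchyPoly y k, (cauchyPoly_monic y k).leadingCoeff]
    | cast j =>
      simp only [borderedCauchy, borderedVandermonde, of_apply, Fin.snoc_castSucc, mul_apply, c, A]
      rw [sum_pow_mul_coeff ((natDegree_cauchyPoly y k).trans_lt n.lt_succ_self),
        eval_cauchyPoly, Fintype.prod_eq_mul_prod_compl k, mul_inv, mul_assoc,
        inv_mul_cancel₀ (prod_ne_zero_iff.2 fun l _ => hxy j l), mul_one]
  have hc : ∏ i, c i = (∏ j, ∏ k, (x j + y k))⁻¹ := by
    simp only [c, Fin.prod_univ_castSucc (n := n), Fin.snoc_castSucc, Fin.snoc_last, mul_one,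
      prod_inv_distrib]
  rw [hfactor, det_mul_column, det_mul, det_borderedVandermonde, det_coeff_cauchyPoly, hc,
    div_eq_inv_mul]

end Determinants

section Integration

variable {α β γ : Type*} [MeasurableSpace α] [MeasurableSpace β] [MeasurableSpace γ]

section IndependentRows

variable {n : ℕ} {ρ : Measure γ} {ν : Measure β} [SigmaFinite ρ]
  {f : Fin n → γ → Fin (n + 1) → ℝ} {g : β → Fin (n + 1) → ℝ}

theorem integrable_det_of_snoc (hf : ∀ i k, Integrable (fun z => f i z k) ρ)
    (hg : ∀ k, Integrable (fun w => g w k) ν) :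
    Integrable (fun q : (Fin n → γ) × β => (of (Fin.snoc (fun i => f i (q.1 i)) (g q.2))).det)
      ((Measure.pi fun _ => ρ).prod ν) := by
  simp_rw [det_of_snoc]
  exact integrable_finsetSum _ fun σ _ =>
    ((Integrable.fintype_prod fun i => hf i (σ i.castSucc)).mul_prod (hg _)).const_mul _

theorem integral_det_of_snoc [SigmaFinite ν] (hf : ∀ i k, Integrable (fun z => f i z k) ρ)
    (hg : ∀ k, Integrable (fun w => g w k) ν) :
    ∫ q : (Fin n → γ) × β, (of (Fin.snoc (fun i => f i (q.1 i)) (g q.2))).det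
        ∂(Measure.pi fun _ => ρ).prod ν =
      (of (Fin.snoc (fun i k => ∫ z, f i z k ∂ρ) fun k => ∫ w, g w k ∂ν)).det := by
  simp_rw [det_of_snoc]
  rw [integral_finsetSum _ fun σ _ =>
    ((Integrable.fintype_prod fun i => hf i (σ i.castSucc)).mul_prod (hg _)).const_mul _]
  refine sum_congr rfl fun σ _ => ?_
  rw [integral_const_mul,
    integral_prod_mul (fun x : Fin n → γ => ∏ i, f i (x i) (σ i.castSucc)) (fun w => g w _),
    integral_fintype_prod_eq_prod (fun i z => f i z (σ i.castSucc))]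

end IndependentRows

def MeasurableEquiv.pairsSnoc (n : ℕ) :
    (Fin n → α × β) × β ≃ᵐ (Fin n → α) × (Fin (n + 1) → β) :=
  ((MeasurableEquiv.arrowProdEquivProdArrow α β (Fin n)).prodCongr (MeasurableEquiv.refl β)).trans
    (MeasurableEquiv.prodAssoc.trans ((MeasurableEquiv.refl _).prodCongr
      (MeasurableEquiv.prodComm.trans
        (MeasurableEquiv.piFinSuccAbove (fun _ => β) (Fin.last n)).symm)))

theorem MeasurableEquiv.pairsSnoc_apply {n : ℕ} (q : (Fin n → α × β) × β) :
    MeasurableEquiv.pairsSnoc n q = (fun i => (q.1 i).1, Fin.snoc (fun i => (q.1 i).2) q.2) := by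
  change (fun i => (q.1 i).1, (Fin.last n).insertNth (α := fun _ => β) q.2 fun i => (q.1 i).2) = _
  rw [Fin.insertNth_last']

theorem measurePreserving_pairsSnoc (n : ℕ) (μ : Measure α) (ν : Measure β) [SigmaFinite μ]
    [SigmaFinite ν] :
    MeasurePreserving (MeasurableEquiv.pairsSnoc n) ((Measure.pi fun _ => μ.prod ν).prod ν)
      ((Measure.pi fun _ => μ).prod (Measure.pi fun _ => ν)) :=
  (((MeasurePreserving.id _).prod
    ((measurePreserving_piFinSuccAbove (fun _ => ν) (Fin.last n)).symm.comp
      Measure.measurePreserving_swap)).comp (measurePreserving_prodAssoc _ _ _)).comp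
    ((measurePreserving_arrowProdEquivProdArrow α β (Fin n) (fun _ => μ) (fun _ => ν)).prod
      (MeasurePreserving.id ν))

section CoupledRows

variable {n : ℕ} {μ : Measure α} {ν : Measure β} [SigmaFinite μ] [SigmaFinite ν]
  {f : Fin n → α × β → Fin (n + 1) → ℝ} {g : β → Fin (n + 1) → ℝ}

theorem integrable_det_of_snoc_pairs (hf : ∀ i k, Integrable (fun z => f i z k) (μ.prod ν))
    (hg : ∀ k, Integrable (fun w => g w k) ν) :
    Integrable (fun p : (Fin n → α) × (Fin (n + 1) → β) =>
        (of (Fin.snoc (fun i => f i (p.1 i, p.2 i.castSucc)) (g (p.2 (Fin.last n))))).det)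
      ((Measure.pi fun _ => μ).prod (Measure.pi fun _ => ν)) := by
  rw [← (measurePreserving_pairsSnoc n μ ν).integrable_comp_emb
    (MeasurableEquiv.measurableEmbedding _)]
  simpa [Function.comp_def, MeasurableEquiv.pairsSnoc_apply] using integrable_det_of_snoc hf hg

theorem integral_det_of_snoc_pairs (hf : ∀ i k, Integrable (fun z => f i z k) (μ.prod ν))
    (hg : ∀ k, Integrable (fun w => g w k) ν) :
    ∫ p : (Fin n → α) × (Fin (n + 1) → β),
        (of (Fin.snoc (fun i => f i (p.1 i, p.2 i.castSucc)) (g (p.2 (Fin.last n))))).det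
        ∂(Measure.pi fun _ => μ).prod (Measure.pi fun _ => ν) =
      (of (Fin.snoc (fun i k => ∫ z, f i z k ∂(μ.prod ν)) fun k => ∫ w, g w k ∂ν)).det := by
  rw [← (measurePreserving_pairsSnoc n μ ν).integral_comp']
  simpa [MeasurableEquiv.pairsSnoc_apply] using integral_det_of_snoc hf hg

end CoupledRows

section Permutations

variable {ι κ : Type*} [Fintype ι] [Fintype κ] {μ : Measure α} {ν : Measure β} [SigmaFinite μ]
  [SigmaFinite ν]

theorem exists_measurePreserving_comp_perm [DecidableEq ι] [DecidableEq κ] (τ : Equiv.Perm ι)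
    (σ : Equiv.Perm κ) :
    ∃ e : (ι → α) × (κ → β) ≃ᵐ (ι → α) × (κ → β), (∀ p, e p = (p.1 ∘ τ, p.2 ∘ σ)) ∧
      MeasurePreserving e ((Measure.pi fun _ => μ).prod (Measure.pi fun _ => ν))
        ((Measure.pi fun _ => μ).prod (Measure.pi fun _ => ν)) := by
  refine ⟨(MeasurableEquiv.piCongrLeft (fun _ => α) τ.symm).prodCongr
    (MeasurableEquiv.piCongrLeft (fun _ => β) σ.symm), fun p => ?_,
    (measurePreserving_piCongrLeft (fun _ => μ) τ.symm).prod
      (measurePreserving_piCongrLeft (fun _ => ν) σ.symm)⟩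
  ext i <;> dsimp only [MeasurableEquiv.prodCongr, MeasurableEquiv.coe_mk]
  · simpa [MeasurableEquiv.coe_piCongrLeft] using
      Equiv.piCongrLeft_apply_apply (fun _ => α) τ.symm p.1 (τ i)
  · simpa [MeasurableEquiv.coe_piCongrLeft] using
      Equiv.piCongrLeft_apply_apply (fun _ => β) σ.symm p.2 (σ i)

theorem integral_sum_perm_perm [DecidableEq ι] [DecidableEq κ] {f : (ι → α) × (κ → β) → ℝ}
    (hf : Integrable f ((Measure.pi fun _ => μ).prod (Measure.pi fun _ => ν))) :
    ∫ p, ∑ τ : Equiv.Perm ι, ∑ σ : Equiv.Perm κ, f (p.1 ∘ τ, p.2 ∘ σ)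
        ∂(Measure.pi fun _ => μ).prod (Measure.pi fun _ => ν) =
      (Fintype.card ι).factorial * (Fintype.card κ).factorial *
        ∫ p, f p ∂(Measure.pi fun _ => μ).prod (Measure.pi fun _ => ν) := by
  have hperm : ∀ (τ : Equiv.Perm ι) (σ : Equiv.Perm κ),
      Integrable (fun p => f (p.1 ∘ τ, p.2 ∘ σ))
        ((Measure.pi fun _ => μ).prod (Measure.pi fun _ => ν)) ∧
      ∫ p, f (p.1 ∘ τ, p.2 ∘ σ) ∂(Measure.pi fun _ => μ).prod (Measure.pi fun _ => ν) =
        ∫ p, f p ∂(Measure.pi fun _ => μ).prod (Measure.pi fun _ => ν) := by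
    intro τ σ
    obtain ⟨e, he, hmp⟩ := exists_measurePreserving_comp_perm (μ := μ) (ν := ν) τ σ
    simp only [← he]
    exact ⟨(hmp.integrable_comp_emb e.measurableEmbedding).2 hf, hmp.integral_comp' f⟩
  rw [integral_finsetSum _ fun τ _ => integrable_finsetSum _ fun σ _ => (hperm τ σ).1]
  simp_rw [integral_finsetSum _ fun σ _ => (hperm _ σ).1, fun τ σ => (hperm τ σ).2]
  simp [Fintype.card_perm, mul_assoc]

theorem ae_forall_pi_prod_pi {P : α → Prop} {Q : β → Prop} (hP : ∀ᵐ a ∂μ, P a)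
    (hQ : ∀ᵐ b ∂ν, Q b) :
    ∀ᵐ p ∂(Measure.pi fun _ : ι => μ).prod (Measure.pi fun _ : κ => ν),
      (∀ i, P (p.1 i)) ∧ ∀ k, Q (p.2 k) := by
  have hP' : ∀ᵐ x ∂Measure.pi fun _ : ι => μ, ∀ i, P (x i) :=
    Measure.ae_pi_le_pi (Filter.eventually_pi fun _ => hP)
  have hQ' : ∀ᵐ y ∂Measure.pi fun _ : κ => ν, ∀ k, Q (y k) :=
    Measure.ae_pi_le_pi (Filter.eventually_pi fun _ => hQ)
  exact (Measure.quasiMeasurePreserving_fst.ae hP').and (Measure.quasiMeasurePreserving_snd.ae hQ')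

end Permutations

end Integration

section Sample

variable {n : ℕ}

noncomputable def sampleMatrix (x : Fin n → ℝ) (y : Fin (n + 1) → ℝ) :
    Matrix (Fin (n + 1)) (Fin (n + 1)) ℝ :=
  of (Fin.snoc (fun i k => x i ^ (i : ℕ) * y i.castSucc ^ (k : ℕ) / (x i + y i.castSucc))
    fun k => y (Fin.last n) ^ (k : ℕ))

theorem det_sampleMatrix (x : Fin n → ℝ) (y : Fin (n + 1) → ℝ) :
    (sampleMatrix x y).det =
      (∏ i, x i ^ (i : ℕ) / (x i + y i.castSucc)) * (vandermonde y).det := by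
  have hrows : sampleMatrix x y = of fun i k =>
      (Fin.snoc (fun i => x i ^ (i : ℕ) / (x i + y i.castSucc)) 1 : Fin (n + 1) → ℝ) i *
        vandermonde y i k := by
    ext i k
    induction i using Fin.lastCases with
    | last => simp [sampleMatrix]
    | cast i =>
      simp only [sampleMatrix, of_apply, Fin.snoc_castSucc, vandermonde_apply]
      ring
  rw [hrows, det_mul_column, Fin.prod_univ_castSucc]
  simp

theorem sum_perm_det_sampleMatrix_comp_right (x : Fin n → ℝ) (y : Fin (n + 1) → ℝ)
    (hxy : ∀ j k, x j + y k ≠ 0) :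
    ∑ σ : Equiv.Perm (Fin (n + 1)), (sampleMatrix x (y ∘ σ)).det = (∏ i, x i ^ (i : ℕ)) *
      ((vandermonde x).det * (vandermonde y).det ^ 2 / ∏ j, ∏ k, (x j + y k)) := by
  have hcauchy := det_borderedCauchy x y hxy
  rw [borderedCauchy, det_of_snoc] at hcauchy
  calc ∑ σ : Equiv.Perm (Fin (n + 1)), (sampleMatrix x (y ∘ σ)).det
      = (∏ i, x i ^ (i : ℕ)) * (vandermonde y).det * ∑ σ : Equiv.Perm (Fin (n + 1)),
          Equiv.Perm.sign σ *
            ((∏ i, (x i + y (σ i.castSucc))⁻¹) * (1 : Fin (n + 1) → ℝ) (σ (Fin.last n))) := by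
        rw [mul_sum]
        refine sum_congr rfl fun σ _ => ?_
        rw [det_sampleMatrix, det_vandermonde_comp_perm]
        simp only [Function.comp_apply, div_eq_mul_inv, prod_mul_distrib, Pi.one_apply]
        ring
    _ = _ := by
        rw [hcauchy]
        ring

theorem sum_perm_det_sampleMatrix (x : Fin n → ℝ) (y : Fin (n + 1) → ℝ)
    (hxy : ∀ j k, x j + y k ≠ 0) :
    ∑ τ : Equiv.Perm (Fin n), ∑ σ : Equiv.Perm (Fin (n + 1)),
        (sampleMatrix (x ∘ τ) (y ∘ σ)).det =
      (vandermonde x).det ^ 2 * (vandermonde y).det ^ 2 / ∏ j, ∏ k, (x j + y k) := by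
  have hprod (τ : Equiv.Perm (Fin n)) : ∏ j, ∏ k, (x (τ j) + y k) = ∏ j, ∏ k, (x j + y k) :=
    Equiv.prod_comp τ fun j => ∏ k, (x j + y k)
  simp only [fun τ => sum_perm_det_sampleMatrix_comp_right (x ∘ τ) y fun j k => hxy (τ j) k,
    det_vandermonde_comp_perm, Function.comp_apply, hprod]
  calc ∑ τ : Equiv.Perm (Fin n), (∏ i, x (τ i) ^ (i : ℕ)) *
        (Equiv.Perm.sign τ * (vandermonde x).det * (vandermonde y).det ^ 2 / ∏ j, ∏ k, (x j + y k))
      = (∑ τ : Equiv.Perm (Fin n), Equiv.Perm.sign τ * ∏ i, vandermonde x (τ i) i) *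
          ((vandermonde x).det * (vandermonde y).det ^ 2 / ∏ j, ∏ k, (x j + y k)) := by
        rw [sum_mul]
        refine sum_congr rfl fun τ _ => ?_
        simp only [vandermonde_apply]
        ring
    _ = _ := by
        rw [← det_apply']
        ring

end Sample

section Moments

variable {n : ℕ} {μ1 μ2 : Measure ℝ} [SigmaFinite μ1] [SigmaFinite μ2]

theorem integrable_det_sampleMatrix
    (hmom : ∀ i j : ℕ, Integrable (fun z : ℝ × ℝ => z.1 ^ i * z.2 ^ j / (z.1 + z.2)) (μ1.prod μ2))
    (hmom2 : ∀ j : ℕ, Integrable (fun w : ℝ => w ^ j) μ2) :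
    Integrable (fun p : (Fin n → ℝ) × (Fin (n + 1) → ℝ) => (sampleMatrix p.1 p.2).det)
      ((Measure.pi fun _ => μ1).prod (Measure.pi fun _ => μ2)) :=
  integrable_det_of_snoc_pairs (fun i k => hmom i k) fun k => hmom2 k

theorem integral_det_sampleMatrix
    (hmom : ∀ i j : ℕ, Integrable (fun z : ℝ × ℝ => z.1 ^ i * z.2 ^ j / (z.1 + z.2)) (μ1.prod μ2))
    (hmom2 : ∀ j : ℕ, Integrable (fun w : ℝ => w ^ j) μ2) :
    ∫ p : (Fin n → ℝ) × (Fin (n + 1) → ℝ), (sampleMatrix p.1 p.2).det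
        ∂(Measure.pi fun _ => μ1).prod (Measure.pi fun _ => μ2) =
      (of (Fin.snoc (fun (i : Fin n) (k : Fin (n + 1)) =>
          ∫ z : ℝ × ℝ, z.1 ^ (i : ℕ) * z.2 ^ (k : ℕ) / (z.1 + z.2) ∂(μ1.prod μ2))
        fun k => ∫ w, w ^ (k : ℕ) ∂μ2)).det :=
  integral_det_of_snoc_pairs (fun i k => hmom i k) fun k => hmom2 k

end Moments

theorem ae_pos_of_measure_Iic_zero {μ : Measure ℝ} (hμ : μ (Set.Iic 0) = 0) : ∀ᵐ x ∂μ, 0 < x := by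
  rw [ae_iff]
  simp only [not_lt]
  exact hμ

/-- Integral representation of the bordered Gram determinant `σ_n`:
`σ_n = 1/(n!(n+1)!) ∫ Δ²(x)Δ²(y) / ∏(x_j+y_k) dμ₁ⁿ dμ₂ⁿ⁺¹`. -/
theorem stmt14 (μ1 μ2 : Measure ℝ) [IsFiniteMeasure μ1] [IsFiniteMeasure μ2]
    (hμ1 : μ1 (Set.Iic 0) = 0) (hμ2 : μ2 (Set.Iic 0) = 0)
    (hmom : ∀ i j : ℕ,
      Integrable (fun p : ℝ × ℝ => p.1 ^ i * p.2 ^ j / (p.1 + p.2)) (μ1.prod μ2))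
    (hmom2 : ∀ j : ℕ, Integrable (fun y : ℝ => y ^ j) μ2)
    (m : ℕ → ℕ → ℝ)
    (hm : ∀ i j, m i j = ∫ p : ℝ × ℝ, p.1 ^ i * p.2 ^ j / (p.1 + p.2) ∂(μ1.prod μ2))
    (φ : ℕ → ℝ) (hφ : ∀ j, φ j = ∫ y : ℝ, y ^ j ∂μ2)
    (n : ℕ) :
    (Matrix.of fun i j : Fin (n+1) => if (i:ℕ) < n then m i j else φ j).det =
      (1 / ((Nat.factorial n : ℝ) * (Nat.factorial (n+1) : ℝ))) *
        ∫ p : (Fin n → ℝ) × (Fin (n+1) → ℝ),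
          ((∏ j : Fin n, ∏ k ∈ Finset.Ioi j, (p.1 k - p.1 j))^2 *
            (∏ j : Fin (n+1), ∏ k ∈ Finset.Ioi j, (p.2 k - p.2 j))^2) /
          (∏ j : Fin n, ∏ k : Fin (n+1), (p.1 j + p.2 k))
          ∂((Measure.pi fun _ : Fin n => μ1).prod (Measure.pi fun _ : Fin (n+1) => μ2)) := by
  have hgram : (of fun i j : Fin (n + 1) => if (i : ℕ) < n then m i j else φ j) =
      of (Fin.snoc (fun (i : Fin n) (k : Fin (n + 1)) => ∫ z : ℝ × ℝ,
        z.1 ^ (i : ℕ) * z.2 ^ (k : ℕ) / (z.1 + z.2) ∂(μ1.prod μ2))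
        fun k => ∫ w, w ^ (k : ℕ) ∂μ2) := by
    ext i k
    induction i using Fin.lastCases <;> simp [hm, hφ]
  rw [integral_congr_ae (g := fun p => ∑ τ : Equiv.Perm (Fin n), ∑ σ : Equiv.Perm (Fin (n + 1)),
      (sampleMatrix (p.1 ∘ τ) (p.2 ∘ σ)).det),
    integral_sum_perm_perm (integrable_det_sampleMatrix hmom hmom2),
    integral_det_sampleMatrix hmom hmom2, ← hgram]
  · simp only [Fintype.card_fin]
    field_simp
  · filter_upwards [ae_forall_pi_prod_pi (ae_pos_of_measure_Iic_zero hμ1)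
      (ae_pos_of_measure_Iic_zero hμ2)] with p hp
    rw [sum_perm_det_sampleMatrix p.1 p.2 fun j k => (add_pos (hp.1 j) (hp.2 k)).ne',
      det_vandermonde, det_vandermonde]
end
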